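/- arXiv:1304.0151 — 7 statements merged into one kernel-verified Lean document; each statement's English description precedes it below -/
import Mathlib

section
/- Let T be a negative binomial random variable counting the number of i.i.d. Bernoulli(p) trials (0 < p ≤ 1) needed to obtain N successes, with N ≥ 2. Then E[(N-1)/(T-1)] = p. -/
/-!
Since `(N - 1) / (t - 1) * C(t - 1, N - 1) = C(t - 2, N - 2)`, weighting the negative binomial
law with parameters `N, p` by `(N - 1) / (T - 1)` gives `p` times the negative binomial law with
parameters `N - 1, p`, shifted by one; the latter has total mass `1`.
-/

theorem tsum_ite_le_eq_tsum_add {α : Type*} [AddCommMonoid α] [TopologicalSpace α]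
    (N : ℕ) (f : ℕ → α) :
    ∑' t : ℕ, (if N ≤ t then f t else 0) = ∑' k : ℕ, f (k + N) := by
  have hinj : Function.Injective (· + N) := add_left_injective N
  have hsupp : (Function.support fun t => if N ≤ t then f t else 0) ⊆ Set.range (· + N) := by
    intro t ht
    have hNt : N ≤ t := by by_contra h; exact ht (if_neg h)
    exact ⟨t - N, Nat.sub_add_cancel hNt⟩
  rw [← hinj.tsum_eq hsupp]
  exact tsum_congr fun k => if_pos (Nat.le_add_left N k)

theorem Nat.cast_choose_succ_mul_div {K : Type*} [Field K] [CharZero K] (m n : ℕ) :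
    ((m + 1).choose (n + 1) : K) * ((n + 1) / (m + 1)) = m.choose n := by
  have h : ((m + 1 : ℕ) : K) * m.choose n = (m + 1).choose (n + 1) * (n + 1 : ℕ) := by
    exact_mod_cast Nat.add_one_mul_choose_eq m n
  push_cast at h
  field_simp
  linear_combination -h

/-- For a negative binomial random variable `T` counting the number of
i.i.d. Bernoulli(p) trials (0 < p ≤ 1) needed to obtain `N ≥ 2` successes, with
`P(T = t) = C(t-1, N-1) p^N (1-p)^(t-N)` for `t ≥ N`, we have `E[(N-1)/(T-1)] = p`. -/
theorem negBinom_expect_inv_pred (p : ℝ) (hp0 : 0 < p) (hp1 : p ≤ 1)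
    (N : ℕ) (hN : 2 ≤ N) :
    (∑' t : ℕ, if N ≤ t then
        (((t - 1).choose (N - 1) : ℝ) * p ^ N * (1 - p) ^ (t - N)) *
          (((N : ℝ) - 1) / ((t : ℝ) - 1))
      else 0) = p := by
  obtain ⟨M, rfl⟩ : ∃ M, N = M + 2 := ⟨N - 2, by omega⟩
  have hq : ‖1 - p‖ < 1 := by
    rw [Real.norm_eq_abs, abs_lt]; constructor <;> linarith
  have hterm : ∀ k : ℕ,
      (((k + (M + 2) - 1).choose (M + 2 - 1) : ℝ) * p ^ (M + 2) *
          (1 - p) ^ (k + (M + 2) - (M + 2))) *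
        ((((M + 2 : ℕ) : ℝ) - 1) / (((k + (M + 2) : ℕ) : ℝ) - 1))
        = p ^ (M + 2) * (((k + M).choose M : ℝ) * (1 - p) ^ k) := by
    intro k
    have hchoose := Nat.cast_choose_succ_mul_div (K := ℝ) (k + M) M
    rw [show k + (M + 2) - 1 = k + M + 1 by omega, show M + 2 - 1 = M + 1 by omega,
      Nat.add_sub_cancel]
    push_cast at hchoose ⊢
    rw [← hchoose]
    ring_nf
  rw [tsum_ite_le_eq_tsum_add, tsum_congr hterm, tsum_mul_left,
    tsum_choose_mul_geometric_of_norm_lt_one M hq, sub_sub_cancel]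
  field_simp
  ring
end

section
/- Let T be a negative binomial random variable counting the number of i.i.d. Bernoulli(p) trials (0 < p ≤ 1) needed to obtain N successes, with N ≥ 3. Then E[(N-1)(N-2)/((T-1)(T-2))] = p^2. -/
/-!
Write `N = M + 3` and `q = 1 - p`. Two applications of
`(n + 1) * n.choose k = (n + 1).choose (k + 1) * (k + 1)` turn the weight
`(N - 1)(N - 2) / ((t - 1)(t - 2))` into a shift of the binomial coefficient, so that each term of the
series becomes `p ^ 2` times the probability that a negative binomial variable with `N - 2` successes
equals `t - 2`. These probabilities sum to one by the negative binomial series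
`∑ (s + M).choose M * q ^ s = 1 / (1 - q) ^ (M + 1)`.
-/

theorem Nat.add_two_choose_add_two_mul (n k : ℕ) :
    (n + 2).choose (k + 2) * ((k + 2) * (k + 1)) = n.choose k * ((n + 2) * (n + 1)) := by
  have h₁ : (n + 2) * (n + 1).choose (k + 1) = (n + 2).choose (k + 2) * (k + 2) :=
    Nat.add_one_mul_choose_eq (n + 1) (k + 1)
  have h₂ : (n + 1) * n.choose k = (n + 1).choose (k + 1) * (k + 1) :=
    Nat.add_one_mul_choose_eq n k
  calc (n + 2).choose (k + 2) * ((k + 2) * (k + 1))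
      = (n + 2) * ((n + 1).choose (k + 1) * (k + 1)) := by
        rw [← mul_assoc, ← h₁]; ring
    _ = n.choose k * ((n + 2) * (n + 1)) := by rw [← h₂]; ring

theorem tsum_eq_tsum_add_of_eq_zero_of_lt {α : Type*} [AddCommMonoid α] [TopologicalSpace α]
    {f : ℕ → α} {k : ℕ} (hf : ∀ t < k, f t = 0) : ∑' t, f t = ∑' s, f (s + k) := by
  refine ((add_left_injective k).tsum_eq fun t ht => ⟨t - k, ?_⟩).symm
  have hkt : k ≤ t := not_lt.mp fun h => ht (hf t h)
  exact Nat.sub_add_cancel hkt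

theorem negBinom_term_mul_inv_pred_sq (p q : ℝ) (s M : ℕ) :
    ((s + M + 2).choose (M + 2) : ℝ) * p ^ (M + 3) * q ^ s *
        ((((M + 3 : ℕ) : ℝ) - 1) * (((M + 3 : ℕ) : ℝ) - 2) /
          ((((s + (M + 3) : ℕ) : ℝ) - 1) * (((s + (M + 3) : ℕ) : ℝ) - 2))) =
      p ^ 2 * (p ^ (M + 1) * (((s + M).choose M : ℝ) * q ^ s)) := by
  have hchoose : ((s + M + 2).choose (M + 2) : ℝ) * ((M + 2) * (M + 1)) =
      ((s + M).choose M : ℝ) * ((s + M + 2) * (s + M + 1)) := by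
    exact_mod_cast Nat.add_two_choose_add_two_mul (s + M) M
  have hden : ((s : ℝ) + M + 2) * (s + M + 1) ≠ 0 := by positivity
  push_cast
  rw [mul_div_assoc', div_eq_iff (by convert hden using 1; ring)]
  linear_combination (p ^ (M + 3) * q ^ s) * hchoose

/-- For a negative binomial random variable `T` (number of i.i.d.
Bernoulli(p) trials until `N ≥ 3` successes, `0 < p ≤ 1`), one has
`E[(N-1)(N-2)/((T-1)(T-2))] = p^2`. -/
theorem negBinom_expect_inv_pred_sq (p : ℝ) (hp0 : 0 < p) (hp1 : p ≤ 1)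
    (N : ℕ) (hN : 3 ≤ N) :
    (∑' t : ℕ, if N ≤ t then
        (((t - 1).choose (N - 1) : ℝ) * p ^ N * (1 - p) ^ (t - N)) *
          ((((N : ℝ) - 1) * ((N : ℝ) - 2)) / ((((t : ℝ) - 1)) * (((t : ℝ) - 2))))
      else 0) = p ^ 2 := by
  obtain ⟨M, rfl⟩ : ∃ M, N = M + 3 := ⟨N - 3, by omega⟩
  have hq : ‖1 - p‖ < 1 := by
    rw [Real.norm_eq_abs, abs_lt]
    exact ⟨by linarith, by linarith⟩
  rw [tsum_eq_tsum_add_of_eq_zero_of_lt (k := M + 3) fun t ht => if_neg (not_le.mpr ht)]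
  calc ∑' s : ℕ, _
      = ∑' s : ℕ, p ^ 2 * (p ^ (M + 1) * (((s + M).choose M : ℝ) * (1 - p) ^ s)) := by
        refine tsum_congr fun s => ?_
        rw [if_pos (Nat.le_add_left _ _), ← negBinom_term_mul_inv_pred_sq]
        congr 5; omega
    _ = p ^ 2 * (p ^ (M + 1) * (1 / (1 - (1 - p)) ^ (M + 1))) := by
        rw [tsum_mul_left, tsum_mul_left, tsum_choose_mul_geometric_of_norm_lt_one M hq]
    _ = p ^ 2 := by
        rw [sub_sub_cancel, mul_one_div_cancel (pow_ne_zero _ hp0.ne'), mul_one]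
end

section
/- Let (F, 𝓕) be a measurable space, ν a probability measure on F, B ∈ 𝓕 with ν(B) > 0, X^1, X^2, ... i.i.d. with law ν, N ≥ 2, and T = inf{n ≥ 1 : Σ_{i=1}^n 1_B(X^i) ≥ N}. Then for any bounded measurable φ : F → ℝ, E[(1/(T-1)) Σ_{i=1}^{T-1} φ(X^i)] = ν(φ), i.e., the stopped empirical average of the first T-1 samples is an unbiased estimator of the ν-integral of φ. -/
open MeasureTheory ProbabilityTheory
open scoped Classical

/-!
On the event `{T = t}` with `t ≥ 2`, the samples `X 0, …, X (t - 2)` are exchangeable: the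
event only depends on how many of them lie in `B` and on `X (t - 1)`, so swapping two of them
preserves both the event and the law of the whole sequence. Hence each of them has the same
integral over `{T = t}` as `φ (X 0)`, and so does their mean. Summing over `t` gives
`∫ φ (X 0) = ∫ φ ∂ν`, because `T ≠ 1` (as `N ≥ 2`) and `T` is almost surely finite by the second
Borel–Cantelli lemma (as `ν B > 0`).
-/

section CountHittingTime

variable (p : ℕ → Prop) [DecidablePred p] (N : ℕ)

-- `sInf ∅ = 0`: this is `0` when `p` holds fewer than `N` times.
noncomputable def countHittingTime : ℕ := sInf {n | N ≤ Nat.count p n}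

lemma countHittingTime_eq_succ_iff (k : ℕ) :
    countHittingTime p N = k + 1 ↔ N ≤ Nat.count p (k + 1) ∧ Nat.count p k < N := by
  rw [countHittingTime, Nat.sInf_upward_closed_eq_succ_iff
    fun a b hab h => h.trans (Nat.count_monotone p hab)]
  simp only [Set.mem_ofPred_eq, not_le]

lemma countHittingTime_ne_one (hN : 2 ≤ N) : countHittingTime p N ≠ 1 := by
  have := Nat.count_le (p := p) (n := 1)
  rw [Ne, countHittingTime_eq_succ_iff, zero_add, Nat.count_zero]
  omega

lemma countHittingTime_ne_zero (hN : 1 ≤ N) (hp : {n | p n}.Infinite) :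
    countHittingTime p N ≠ 0 := by
  have hmem : Nat.nth p N ∈ {n | N ≤ Nat.count p n} := (Nat.count_nth_of_infinite hp N).ge
  intro h
  have h0 := Nat.sInf_mem ⟨_, hmem⟩
  rw [← countHittingTime, h, Set.mem_ofPred_eq, Nat.count_zero] at h0
  omega

lemma Nat.count_comp_swap {i j n : ℕ} (hi : i < n) (hj : j < n) :
    Nat.count (fun m => p (Equiv.swap i j m)) n = Nat.count p n := by
  simp only [Nat.count_eq_card_filter_range]
  refine Finset.card_equiv (Equiv.swap i j) fun m => ?_
  simp only [Finset.mem_filter, Finset.mem_range, Equiv.swap_apply_def]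
  split_ifs <;> grind

lemma countHittingTime_comp_swap_eq_succ_iff {i j k : ℕ} (hi : i < k) (hj : j < k) :
    countHittingTime (fun m => p (Equiv.swap i j m)) N = k + 1 ↔ countHittingTime p N = k + 1 := by
  simp only [countHittingTime_eq_succ_iff, Nat.count_comp_swap p hi hj,
    Nat.count_comp_swap p (hi.trans k.lt_succ_self) (hj.trans k.lt_succ_self)]

end CountHittingTime

-- The mean of `a 0, …, a (t - 2)`, and `0` for `t ≤ 1`.
noncomputable def meanBeforeLast (a : ℕ → ℝ) (t : ℕ) : ℝ :=
  1 / ((t : ℝ) - 1) * ∑ i ∈ Finset.range (t - 1), a i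

lemma meanBeforeLast_add_two (a : ℕ → ℝ) (k : ℕ) :
    meanBeforeLast a (k + 2) = ((k : ℝ) + 1)⁻¹ * ∑ i ∈ Finset.range (k + 1), a i := by
  rw [meanBeforeLast, one_div]
  push_cast
  ring_nf

lemma abs_meanBeforeLast_le {a : ℕ → ℝ} {C : ℝ} (ha : ∀ i, |a i| ≤ C) (t : ℕ) :
    |meanBeforeLast a t| ≤ C := by
  obtain _ | n := t
  · simpa [meanBeforeLast] using (abs_nonneg _).trans (ha 0)
  have hsum : |∑ i ∈ Finset.range n, a i| ≤ n * C := by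
    simpa using (Finset.abs_sum_le_sum_abs a (Finset.range n)).trans
      (Finset.sum_le_card_nsmul _ _ _ fun i _ => ha i)
  rcases n.eq_zero_or_pos with rfl | hn
  · simpa [meanBeforeLast] using (abs_nonneg _).trans (ha 0)
  have hn' : (0 : ℝ) < n := by exact_mod_cast hn
  rw [meanBeforeLast, Nat.add_sub_cancel, Nat.cast_succ, add_sub_cancel_right, abs_mul,
    abs_of_pos (by positivity), one_div_mul_eq_div, div_le_iff₀ hn', mul_comm]
  exact hsum

section Measurability

variable {F : Type*} [MeasurableSpace F] {B : Set F}

lemma measurable_count_mem (hB : MeasurableSet B) (n : ℕ) :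
    Measurable fun x : ℕ → F => Nat.count (fun m => x m ∈ B) n := by
  induction n with
  | zero => simp only [Nat.count_zero]; exact measurable_const
  | succ n ih =>
    simp only [Nat.count_succ]
    exact ih.add (Measurable.ite (measurable_pi_apply n hB) measurable_const measurable_const)

lemma measurable_countHittingTime (hB : MeasurableSet B) (N : ℕ) :
    Measurable fun x : ℕ → F => countHittingTime (fun m => x m ∈ B) N := by
  set τ := fun x : ℕ → F => countHittingTime (fun m => x m ∈ B) N
  have hsucc : ∀ k, MeasurableSet (τ ⁻¹' {k + 1}) := fun k => by
    simp only [Set.preimage, Set.mem_singleton_iff, τ, countHittingTime_eq_succ_iff,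
      Set.ofPred_and]
    exact (measurableSet_le measurable_const (measurable_count_mem hB _)).inter
      (measurableSet_lt (measurable_count_mem hB _) measurable_const)
  refine measurable_to_countable' fun t => ?_
  cases t with
  | succ k => exact hsucc k
  | zero =>
    have : τ ⁻¹' {0} = (⋃ k, τ ⁻¹' {k + 1})ᶜ := by
      ext x
      simp only [Set.mem_preimage, Set.mem_singleton_iff, Set.mem_compl_iff, Set.mem_iUnion,
        not_exists]
      exact ⟨fun h k => by omega, fun h => by by_contra h'; exact h (τ x - 1) (by omega)⟩
    rw [this]
    exact (MeasurableSet.iUnion hsucc).compl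

lemma measurable_apply_countable_index {α β ι : Type*} [MeasurableSpace α] [MeasurableSpace β]
    [MeasurableSpace ι] [Countable ι] [MeasurableSingletonClass ι] {G : ι → α → β}
    (hG : ∀ t, Measurable (G t)) {T : α → ι} (hT : Measurable T) :
    Measurable fun a => G (T a) a :=
  (measurable_from_prod_countable_left (f := fun p : α × ι => G p.2 p.1) hG).comp
    (measurable_id.prodMk hT)

end Measurability

section Probability

variable {Ω F : Type*} [MeasurableSpace Ω] [MeasurableSpace F] {μ : Measure Ω} {ν : Measure F}

lemma ProbabilityTheory.iIndepFun.identDistrib_comp_injective {ι : Type*} [Countable ι]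
    {X : ι → Ω → F} (hXm : ∀ i, Measurable (X i)) (hindep : iIndepFun X μ)
    (hlaw : ∀ i, μ.map (X i) = ν) {σ : ι → ι} (hσ : σ.Injective) :
    IdentDistrib (fun ω i => X (σ i) ω) (fun ω i => X i ω) μ μ :=
  .pi (fun i => ⟨(hXm _).aemeasurable, (hXm i).aemeasurable, by rw [hlaw, hlaw]⟩)
    (hindep.precomp hσ) hindep

lemma integrable_meanBeforeLast [IsFiniteMeasure μ] {f : ℕ → Ω → ℝ}
    (hf : ∀ i, Measurable (f i)) {C : ℝ} (hC : ∀ i ω, |f i ω| ≤ C) {T : Ω → ℕ}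
    (hT : Measurable T) :
    Integrable (fun ω => meanBeforeLast (fun i => f i ω) (T ω)) μ :=
  .of_bound
    (measurable_apply_countable_index (G := fun t ω => meanBeforeLast (fun i => f i ω) t)
      (fun _ => (Finset.measurable_sum _ fun i _ => hf i).const_mul _) hT).aestronglyMeasurable C
    (.of_forall fun ω => abs_meanBeforeLast_le (fun i => hC i ω) _)

lemma integral_eq_of_setIntegral_fiber_eq {ι E : Type*} [Countable ι] [MeasurableSpace ι]
    [MeasurableSingletonClass ι] [NormedAddCommGroup E] [NormedSpace ℝ E] {T : Ω → ι}
    (hT : Measurable T) {f g : Ω → E} (hf : Integrable f μ) (hg : Integrable g μ)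
    (h : ∀ t, ∫ ω in T ⁻¹' {t}, f ω ∂μ = ∫ ω in T ⁻¹' {t}, g ω ∂μ) :
    ∫ ω, f ω ∂μ = ∫ ω, g ω ∂μ := by
  have hsum : ∀ f : Ω → E, Integrable f μ → ∫ ω, f ω ∂μ = ∑' t, ∫ ω in T ⁻¹' {t}, f ω ∂μ :=
    fun f hf => by
      rw [← integral_iUnion (fun t => hT (measurableSet_singleton t))
        (pairwise_disjoint_fiber T) hf.integrableOn, ← Set.preimage_iUnion,
        Set.iUnion_of_singleton, Set.preimage_univ, setIntegral_univ]
  rw [hsum f hf, hsum g hg, tsum_congr h]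

variable {X : ℕ → Ω → F}

lemma setIntegral_preimage_swap_invariant (hXm : ∀ i, Measurable (X i))
    (hindep : iIndepFun X μ) (hlaw : ∀ i, μ.map (X i) = ν) {i j : ℕ} {S : Set (ℕ → F)}
    (hS : MeasurableSet S) (hSswap : ∀ x, (fun n => x (Equiv.swap i j n)) ∈ S ↔ x ∈ S)
    {φ : F → ℝ} (hφ : Measurable φ) :
    ∫ ω in (fun ω n => X n ω) ⁻¹' S, φ (X i ω) ∂μ
      = ∫ ω in (fun ω n => X n ω) ⁻¹' S, φ (X j ω) ∂μ := by
  have hpath : Measurable fun ω n => X n ω := measurable_pi_lambda _ hXm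
  have hId := (hindep.identDistrib_comp_injective hXm hlaw (Equiv.swap i j).injective).comp
    (u := S.indicator fun x => φ (x j)) ((hφ.comp (measurable_pi_apply j)).indicator hS)
  rw [← integral_indicator (hpath hS), ← integral_indicator (hpath hS)]
  convert hId.integral_eq using 2
  · funext ω
    simp only [Set.indicator, Set.mem_preimage, Function.comp_apply, Equiv.swap_apply_right]
    exact if_congr (hSswap fun n => X n ω).symm rfl rfl
  · rfl

lemma ae_infinite_setOf_mem [IsProbabilityMeasure μ] (hXm : ∀ i, Measurable (X i))
    (hindep : iIndepFun X μ) (hlaw : ∀ i, μ.map (X i) = ν) {B : Set F} (hB : MeasurableSet B)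
    (hBpos : 0 < ν B) : ∀ᵐ ω ∂μ, {n | X n ω ∈ B}.Infinite := by
  have hsets : iIndepSet (fun n => X n ⁻¹' B) μ :=
    (iIndepSet_iff_meas_biInter fun n => hXm n hB).2 fun S =>
      iIndepFun_iff_measure_inter_preimage_eq_mul.1 hindep S fun _ _ => hB
  have hsum : ∑' n, μ (X n ⁻¹' B) = ⊤ := by
    simp only [← Measure.map_apply (hXm _) hB, hlaw]
    exact ENNReal.tsum_const_eq_top_of_ne_zero hBpos.ne'
  have h := measure_limsup_eq_one (fun n => hXm n hB) hsets hsum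
  rw [← prob_compl_eq_zero_iff (MeasurableSet.measurableSet_limsup fun n => hXm n hB)] at h
  filter_upwards [measure_eq_zero_iff_ae_notMem.1 h] with ω hω
  simpa [Filter.mem_limsup_iff_frequently_mem, Nat.frequently_atTop_iff_infinite] using hω

lemma setIntegral_meanBeforeLast_countHittingTime (hXm : ∀ i, Measurable (X i))
    (hindep : iIndepFun X μ) (hlaw : ∀ i, μ.map (X i) = ν) {B : Set F} (hB : MeasurableSet B)
    {φ : F → ℝ} (hφm : Measurable φ) (hφ : Integrable φ ν) (N k : ℕ) :
    ∫ ω in {ω | countHittingTime (fun n => X n ω ∈ B) N = k + 2},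
        meanBeforeLast (fun i => φ (X i ω)) (countHittingTime (fun n => X n ω ∈ B) N) ∂μ
      = ∫ ω in {ω | countHittingTime (fun n => X n ω ∈ B) N = k + 2}, φ (X 0 ω) ∂μ := by
  set S := {x : ℕ → F | countHittingTime (fun n => x n ∈ B) N = k + 2}
  have hS : MeasurableSet S := measurable_countHittingTime hB N (measurableSet_singleton _)
  have hφX : ∀ i, Integrable (fun ω => φ (X i ω)) μ := fun i =>
    (hlaw i ▸ hφ).comp_measurable (hXm i)
  -- The event only sees the first `k + 1` samples through their number of visits to `B`.
  have hswap : ∀ i ≤ k, ∫ ω in (fun ω n => X n ω) ⁻¹' S, φ (X i ω) ∂μ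
      = ∫ ω in (fun ω n => X n ω) ⁻¹' S, φ (X 0 ω) ∂μ := fun i hi =>
    setIntegral_preimage_swap_invariant hXm hindep hlaw hS (fun x =>
      countHittingTime_comp_swap_eq_succ_iff (fun m => x m ∈ B) N (Nat.lt_succ_of_le hi)
        k.succ_pos) hφm
  calc _ = ∫ ω in (fun ω n => X n ω) ⁻¹' S,
        ((k : ℝ) + 1)⁻¹ * ∑ i ∈ Finset.range (k + 1), φ (X i ω) ∂μ :=
        setIntegral_congr_fun (measurable_pi_lambda _ hXm hS) fun ω (hω : _ = k + 2) => by
          rw [hω, meanBeforeLast_add_two]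
    _ = ((k : ℝ) + 1)⁻¹ * ∑ i ∈ Finset.range (k + 1),
        ∫ ω in (fun ω n => X n ω) ⁻¹' S, φ (X 0 ω) ∂μ := by
      rw [integral_const_mul, integral_finsetSum _ fun i _ => (hφX i).integrableOn,
        Finset.sum_congr rfl fun i hi => hswap i (Nat.lt_succ_iff.1 (Finset.mem_range.1 hi))]
    _ = ∫ ω in (fun ω n => X n ω) ⁻¹' S, φ (X 0 ω) ∂μ := by
      rw [Finset.sum_const, Finset.card_range, nsmul_eq_mul]
      push_cast
      field_simp

end Probability

/-- Let `ν` be a probability measure on `F`, `B` measurable with `ν B > 0`,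
`X 0, X 1, ...` i.i.d. with law `ν`, `N ≥ 2`, and `T` the first time `n` such that `N`
of the samples `X 0, ..., X (n-1)` lie in `B`.  Then for any bounded measurable
`φ : F → ℝ`, the stopped empirical average of the first `T - 1` samples is an unbiased
estimator of `∫ φ dν`. -/
theorem alive_empirical_average_unbiased
    {F : Type*} [MeasurableSpace F] {Ω : Type*} [MeasurableSpace Ω]
    (μ : Measure Ω) [IsProbabilityMeasure μ]
    (ν : Measure F) [IsProbabilityMeasure ν]
    (X : ℕ → Ω → F) (hXm : ∀ i, Measurable (X i))
    (hindep : iIndepFun X μ)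
    (hlaw : ∀ i, Measure.map (X i) μ = ν)
    (B : Set F) (hB : MeasurableSet B) (hBpos : 0 < ν B)
    (N : ℕ) (hN : 2 ≤ N)
    (T : Ω → ℕ)
    (hT : ∀ ω, T ω =
      sInf {n : ℕ | N ≤ ((Finset.range n).filter (fun i => X i ω ∈ B)).card})
    (φ : F → ℝ) (hφm : Measurable φ) (C : ℝ) (hφb : ∀ x, |φ x| ≤ C) :
    ∫ ω, (1 / ((T ω : ℝ) - 1)) * ∑ i ∈ Finset.range (T ω - 1), φ (X i ω) ∂μ
      = ∫ x, φ x ∂ν := by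
  have hTτ : T = fun ω => countHittingTime (fun n => X n ω ∈ B) N := funext fun ω => by
    simp only [hT, countHittingTime, Nat.count_eq_card_filter_range]
  have hTm : Measurable T :=
    hTτ ▸ (measurable_countHittingTime hB N).comp (measurable_pi_lambda _ hXm)
  have hφ : Integrable φ ν := .of_bound hφm.aestronglyMeasurable C (.of_forall hφb)
  change ∫ ω, meanBeforeLast (fun i => φ (X i ω)) (T ω) ∂μ = _
  rw [← hlaw 0, integral_map (hXm 0).aemeasurable hφm.aestronglyMeasurable]
  refine integral_eq_of_setIntegral_fiber_eq hTm
    (integrable_meanBeforeLast (fun i => hφm.comp (hXm i)) (fun _ _ => hφb _) hTm)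
    ((hlaw 0 ▸ hφ).comp_measurable (hXm 0)) fun t => ?_
  obtain _ | _ | k := t
  · have hnull : μ (T ⁻¹' {0}) = 0 :=
      measure_eq_zero_iff_ae_notMem.2 <| (ae_infinite_setOf_mem hXm hindep hlaw hB hBpos).mono
        fun ω hω => by simpa [hTτ] using countHittingTime_ne_zero _ N (by omega) hω
    rw [setIntegral_measure_zero _ hnull, setIntegral_measure_zero _ hnull]
  · have hempty : T ⁻¹' {1} = ∅ :=
      Set.eq_empty_of_forall_notMem fun ω => by simpa [hTτ] using countHittingTime_ne_one _ N hN
    rw [hempty, setIntegral_empty, setIntegral_empty]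
  · rw [hTτ]
    exact setIntegral_meanBeforeLast_countHittingTime hXm hindep hlaw hB hφm hφ N k
end

section
/- With the same setup (ν(B) ∧ ν(B^c) ≥ c > 0, N ≥ 2, T negative binomial with parameters N and ν(B)): for every p ∈ [1,4] there exists C_p < ∞ depending only on p and c such that E[ | ((N-1)/(T-1))·ν(1_B φ)/ν(B) + ((T-N)/(T-1))·ν(1_{B^c} φ)/ν(B^c) − ν(φ) |^p ]^{1/p} ≤ C_p ‖φ‖_∞ / √N for all bounded measurable φ. -/
/-!
Write `q = ν(B)` and `a`, `b` for the conditional means of `φ` on `B` and `Bᶜ`. Then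
`ν(φ) = q a + (1 - q) b`, so the quantity inside the absolute value is `(a - b) ((N-1)/(T-1) - q)`,
and it suffices to bound the `Lᵖ` error of the estimator `(N-1)/(T-1)` of `q` by `O(N^{-1/2})`.
For `T ≥ N ≥ 2` one has `N |(N-1)/(T-1) - q| ≤ 2 (|qT - N| + 1)`, and the fourth central moment
of `qT` is `O(N²)`, as follows from the rising-factorial moments
`E[T (T+1) ⋯ (T+k-1)] = N (N+1) ⋯ (N+k-1) / q^k`. Hence the fourth moment of the error is
`O(N^{-2})`, and `y^p ≤ 1 + y^4` (for `y ≥ 0`, `0 ≤ p ≤ 4`) applied to `y = √N |error|`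
transfers this to all `p ≤ 4`.
-/

open MeasureTheory

theorem Nat.choose_mul_add_ascFactorial (n m k : ℕ) :
    (n + m).choose m * (n + m + 1).ascFactorial k
      = (m + 1).ascFactorial k * (n + (m + k)).choose (m + k) := by
  apply Nat.eq_of_mul_eq_mul_right (Nat.mul_pos m.factorial_pos n.factorial_pos)
  calc (n + m).choose m * (n + m + 1).ascFactorial k * (m.factorial * n.factorial)
      = ((n + m).choose m * n.factorial * m.factorial) * (n + m + 1).ascFactorial k := by ring
    _ = (n + (m + k)).choose (m + k) * n.factorial * (m.factorial * (m + 1).ascFactorial k) := by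
      rw [Nat.add_choose_mul_factorial_mul_factorial, Nat.factorial_mul_ascFactorial,
        Nat.factorial_mul_ascFactorial, Nat.add_choose_mul_factorial_mul_factorial, add_assoc]
    _ = (m + 1).ascFactorial k * (n + (m + k)).choose (m + k) * (m.factorial * n.factorial) := by
      ring

/-- `P(T = t)` for `T` the index of the `N`-th success in i.i.d. Bernoulli(`q`) trials. -/
def negBinomialMass (N : ℕ) (q : ℝ) (t : ℕ) : ℝ :=
  if N ≤ t then ((t - 1).choose (N - 1) : ℝ) * q ^ N * (1 - q) ^ (t - N) else 0

theorem hasSum_negBinomialMass_mul_ascFactorial {q : ℝ} (hq0 : 0 < q) (hq1 : q < 1)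
    {N : ℕ} (hN : 1 ≤ N) (k : ℕ) :
    HasSum (fun t ↦ negBinomialMass N q t * t.ascFactorial k) (N.ascFactorial k / q ^ k) := by
  obtain ⟨m, rfl⟩ : ∃ m, N = m + 1 := ⟨N - 1, by omega⟩
  -- after the shift `t = n + N`, `Nat.choose_mul_add_ascFactorial` turns the series into
  -- `N.ascFactorial k * q ^ N * ∑ n, (n + (N - 1 + k)).choose (N - 1 + k) * (1 - q) ^ n`
  have hgeom := (hasSum_choose_mul_geometric_of_norm_lt_one (m + k) (r := 1 - q)
    (by rw [Real.norm_eq_abs, abs_lt]; constructor <;> linarith)).mul_left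
      (q ^ (m + 1) * (m + 1).ascFactorial k)
  rw [sub_sub_cancel, show q ^ (m + 1) * (m + 1).ascFactorial k * (1 / q ^ (m + k + 1))
    = (m + 1).ascFactorial k / q ^ k by field_simp; ring] at hgeom
  have hshift : HasSum
      (fun n ↦ negBinomialMass (m + 1) q (n + (m + 1)) * (n + (m + 1)).ascFactorial k)
      ((m + 1).ascFactorial k / q ^ k) := hgeom.congr_fun fun n ↦ by
    have hchoose := congrArg (Nat.cast (R := ℝ)) (Nat.choose_mul_add_ascFactorial n m k)
    push_cast at hchoose
    simp only [negBinomialMass, le_add_self, if_true, Nat.add_sub_cancel,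
      show n + (m + 1) - 1 = n + m by omega]
    rw [← add_assoc]
    linear_combination q ^ (m + 1) * (1 - q) ^ n * hchoose
  have hvanish : ∑ t ∈ Finset.range (m + 1), negBinomialMass (m + 1) q t * t.ascFactorial k = 0 :=
    Finset.sum_eq_zero fun t ht ↦ by
      simp [negBinomialMass, (Finset.mem_range.mp ht).not_ge]
  exact (hasSum_nat_add_iff' (m + 1)).mp (by rwa [hvanish, sub_zero])

theorem hasSum_negBinomialMass {q : ℝ} (hq0 : 0 < q) (hq1 : q < 1) {N : ℕ} (hN : 1 ≤ N) :
    HasSum (negBinomialMass N q) 1 := by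
  simpa using hasSum_negBinomialMass_mul_ascFactorial hq0 hq1 hN 0

theorem hasSum_negBinomialMass_mul_sub_pow_four {q : ℝ} (hq0 : 0 < q) (hq1 : q < 1)
    {N : ℕ} (hN : 1 ≤ N) :
    HasSum (fun t ↦ negBinomialMass N q t * (q * t - N) ^ 4)
      (3 * (N * (1 - q)) ^ 2 + N * (1 - q) * (q ^ 2 - 6 * q + 6)) := by
  have h := hasSum_negBinomialMass_mul_ascFactorial hq0 hq1 hN
  -- expand `(q t - N) ^ 4` in the rising factorials `t.ascFactorial k`, `k ≤ 4`
  have hsum := ((((h 0).mul_left ((N : ℝ) ^ 4)).add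
    ((h 1).mul_left (-4 * q * N ^ 3 - 6 * q ^ 2 * N ^ 2 - 4 * q ^ 3 * N - q ^ 4))).add
    ((h 2).mul_left (6 * q ^ 2 * N ^ 2 + 12 * q ^ 3 * N + 7 * q ^ 4))).add
    ((h 3).mul_left (-4 * q ^ 3 * N - 6 * q ^ 4)) |>.add ((h 4).mul_left (q ^ 4))
  simp only [Nat.ascFactorial_succ, Nat.ascFactorial_zero, Nat.cast_mul, Nat.cast_add,
    Nat.cast_one, Nat.cast_ofNat, Nat.cast_zero] at hsum
  convert! hsum.congr_fun (fun t ↦ ?_) using 1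
  · field_simp
    ring
  · ring

theorem negBinomialMass_nonneg {q : ℝ} (hq0 : 0 ≤ q) (hq1 : q ≤ 1) (N t : ℕ) :
    0 ≤ negBinomialMass N q t := by
  unfold negBinomialMass
  split_ifs
  · exact mul_nonneg (by positivity) (pow_nonneg (by linarith) _)
  · exact le_rfl

theorem Real.rpow_le_one_add_rpow {y p r : ℝ} (hy : 0 ≤ y) (hp : 0 ≤ p) (hpr : p ≤ r) :
    y ^ p ≤ 1 + y ^ r := by
  rcases le_total y 1 with hy1 | hy1
  · linarith [Real.rpow_le_one hy hy1 hp, Real.rpow_nonneg hy r]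
  · linarith [Real.rpow_le_rpow_of_exponent_le hy1 hpr]

theorem abs_rpow_le_inv_sqrt_rpow_mul {n : ℝ} (hn : 0 < n) {p : ℝ} (hp0 : 0 ≤ p) (hp4 : p ≤ 4)
    (x : ℝ) : |x| ^ p ≤ (√n)⁻¹ ^ p * (1 + (n * x) ^ 4 / n ^ 2) := by
  have hs : 0 < √n := Real.sqrt_pos.mpr hn
  have hscale : (√n * |x|) ^ (4 : ℝ) = (n * x) ^ 4 / n ^ 2 := by
    have h4 : √n ^ 4 = n ^ 2 := by
      rw [show 4 = 2 * 2 from rfl, pow_mul, Real.sq_sqrt hn.le]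
    rw [Real.rpow_ofNat, mul_pow, (by decide : Even 4).pow_abs, h4]
    field_simp
  calc |x| ^ p = (√n)⁻¹ ^ p * (√n * |x|) ^ p := by
        rw [← Real.mul_rpow (by positivity) (by positivity), inv_mul_cancel_left₀ hs.ne']
    _ ≤ (√n)⁻¹ ^ p * (1 + (n * x) ^ 4 / n ^ 2) := by
        rw [← hscale]
        gcongr
        exact Real.rpow_le_one_add_rpow (by positivity) hp0 hp4

theorem abs_mul_div_sub_le {q : ℝ} (hq0 : 0 ≤ q) (hq1 : q ≤ 1) {n t : ℝ} (hn : 2 ≤ n)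
    (hnt : n ≤ t) : |n * ((n - 1) / (t - 1) - q)| ≤ 2 * (|q * t - n| + 1) := by
  have ht : 0 < t - 1 := by linarith
  have hfac : n * ((n - 1) / (t - 1) - q) = n / (t - 1) * ((n - q * t) - (1 - q)) := by
    field_simp
    ring
  rw [hfac, abs_mul, abs_of_nonneg (by positivity)]
  gcongr
  · rw [div_le_iff₀ ht]
    linarith
  · calc |n - q * t - (1 - q)| ≤ |n - q * t| + |1 - q| := abs_sub _ _
      _ ≤ |q * t - n| + 1 := by
        rw [abs_sub_comm, abs_of_nonneg (by linarith : (0 : ℝ) ≤ 1 - q)]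
        linarith

theorem mul_div_sub_pow_four_le {q : ℝ} (hq0 : 0 ≤ q) (hq1 : q ≤ 1) {n t : ℝ} (hn : 2 ≤ n)
    (hnt : n ≤ t) : (n * ((n - 1) / (t - 1) - q)) ^ 4 ≤ 128 * ((q * t - n) ^ 4 + 1) := by
  have hpow : ∀ x : ℝ, x ^ 4 = |x| ^ 4 := fun x ↦ ((by decide : Even 4).pow_abs x).symm
  calc (n * ((n - 1) / (t - 1) - q)) ^ 4 ≤ (2 * (|q * t - n| + 1)) ^ 4 := by
        rw [hpow]
        exact pow_le_pow_left₀ (abs_nonneg _) (abs_mul_div_sub_le hq0 hq1 hn hnt) 4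
    _ = 16 * (|q * t - n| + 1) ^ 4 := by ring
    _ ≤ 16 * (2 ^ 3 * (|q * t - n| ^ 4 + 1 ^ 4)) := by
        gcongr
        exact add_pow_le (abs_nonneg _) zero_le_one 4
    _ = 128 * ((q * t - n) ^ 4 + 1) := by rw [hpow (q * t - n)]; ring

theorem tsum_negBinomialMass_mul_abs_rpow_le {q : ℝ} (hq0 : 0 < q) (hq1 : q < 1) {N : ℕ}
    (hN : 2 ≤ N) {p : ℝ} (hp0 : 0 ≤ p) (hp4 : p ≤ 4) :
    ∑' t, negBinomialMass N q t * |(N - 1 : ℝ) / (t - 1) - q| ^ p ≤ 1281 * (√N)⁻¹ ^ p := by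
  have hN2 : (2 : ℝ) ≤ N := by exact_mod_cast hN
  have hmass := negBinomialMass_nonneg hq0.le hq1.le N
  set A := 3 * (N * (1 - q)) ^ 2 + N * (1 - q) * (q ^ 2 - 6 * q + 6)
  have hmajorant := ((hasSum_negBinomialMass hq0 hq1 (N := N) (by omega)).add
    (((hasSum_negBinomialMass_mul_sub_pow_four hq0 hq1 (N := N) (by omega)).add
      (hasSum_negBinomialMass hq0 hq1 (N := N) (by omega))).mul_left (128 / (N : ℝ) ^ 2))).mul_left
        ((√N)⁻¹ ^ p)
  have hpoint : ∀ t, negBinomialMass N q t * |(N - 1 : ℝ) / (t - 1) - q| ^ p ≤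
      (√N)⁻¹ ^ p * (negBinomialMass N q t + 128 / (N : ℝ) ^ 2 *
        (negBinomialMass N q t * (q * t - N) ^ 4 + negBinomialMass N q t)) := by
    intro t
    by_cases ht : N ≤ t
    · have hNt : (N : ℝ) ≤ t := by exact_mod_cast ht
      have h4 := mul_div_sub_pow_four_le hq0.le hq1.le hN2 hNt
      calc negBinomialMass N q t * |(N - 1 : ℝ) / (t - 1) - q| ^ p
          ≤ negBinomialMass N q t * ((√N)⁻¹ ^ p *
              (1 + (N * ((N - 1 : ℝ) / (t - 1) - q)) ^ 4 / (N : ℝ) ^ 2)) := by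
            exact mul_le_mul_of_nonneg_left
              (abs_rpow_le_inv_sqrt_rpow_mul (by positivity) hp0 hp4 _) (hmass t)
        _ ≤ negBinomialMass N q t * ((√N)⁻¹ ^ p *
              (1 + 128 * ((q * t - N) ^ 4 + 1) / (N : ℝ) ^ 2)) := by
            gcongr
            exact hmass t
        _ = _ := by ring
    · simp [negBinomialMass, ht]
  have hA9 : A ≤ 9 * (N : ℝ) ^ 2 := by
    have h1 : (1 - q) ^ 2 ≤ 1 := by nlinarith
    have h2 : (1 - q) * (q ^ 2 - 6 * q + 6) ≤ 6 := by nlinarith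
    have h3 : (N : ℝ) ≤ N ^ 2 := by nlinarith
    nlinarith
  calc ∑' t, negBinomialMass N q t * |(N - 1 : ℝ) / (t - 1) - q| ^ p
      ≤ (√N)⁻¹ ^ p * (1 + 128 / (N : ℝ) ^ 2 * (A + 1)) :=
        hmajorant.tsum_eq ▸
          (Summable.of_nonneg_of_le (fun t ↦ mul_nonneg (hmass t) (by positivity)) hpoint
            hmajorant.summable).tsum_le_tsum hpoint hmajorant.summable
    _ ≤ 1281 * (√N)⁻¹ ^ p := by
        rw [mul_comm 1281]
        gcongr
        have : 128 / (N : ℝ) ^ 2 * (A + 1) ≤ 1280 := by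
          rw [div_mul_eq_mul_div, div_le_iff₀ (by positivity)]
          nlinarith
        linarith

theorem negBinomial_Lp_error_le {q : ℝ} (hq0 : 0 < q) (hq1 : q < 1) {N : ℕ} (hN : 2 ≤ N)
    {p : ℝ} (hp1 : 1 ≤ p) (hp4 : p ≤ 4) :
    (∑' t, negBinomialMass N q t * |(N - 1 : ℝ) / (t - 1) - q| ^ p) ^ (1 / p) ≤ 1281 / √N := by
  have hp0 : 0 < p := zero_lt_one.trans_le hp1
  calc (∑' t, negBinomialMass N q t * |(N - 1 : ℝ) / (t - 1) - q| ^ p) ^ (1 / p)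
      ≤ (1281 * (√N)⁻¹ ^ p) ^ (1 / p) :=
        Real.rpow_le_rpow
          (tsum_nonneg fun t ↦
            mul_nonneg (negBinomialMass_nonneg hq0.le hq1.le N t) (by positivity))
          (tsum_negBinomialMass_mul_abs_rpow_le hq0 hq1 hN hp0.le hp4) (by positivity)
    _ = 1281 ^ (1 / p) * (√N)⁻¹ := by
        rw [Real.mul_rpow (by norm_num) (by positivity), one_div,
          Real.rpow_rpow_inv (by positivity) hp0.ne']
    _ ≤ 1281 / √N := by
        rw [div_eq_mul_inv]
        exact mul_le_mul_of_nonneg_right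
          (Real.rpow_le_self_of_one_le (by norm_num) (div_le_one_of_le₀ hp1 hp0.le))
          (by positivity)

theorem negBinomial_summand_eq {N : ℕ} (hN : 2 ≤ N) (q a b p : ℝ) (t : ℕ) :
    (if N ≤ t then ((t - 1).choose (N - 1) : ℝ) * q ^ N * (1 - q) ^ (t - N) *
        |(N - 1 : ℝ) / (t - 1) * a + (t - N : ℝ) / (t - 1) * b - (q * a + (1 - q) * b)| ^ p
      else 0)
      = |a - b| ^ p * (negBinomialMass N q t * |(N - 1 : ℝ) / (t - 1) - q| ^ p) := by
  unfold negBinomialMass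
  split_ifs with ht
  · have ht1 : (t : ℝ) - 1 ≠ 0 := by
      have : (2 : ℝ) ≤ t := by exact_mod_cast hN.trans ht
      linarith
    rw [show (N - 1 : ℝ) / (t - 1) * a + (t - N : ℝ) / (t - 1) * b - (q * a + (1 - q) * b)
        = (a - b) * ((N - 1 : ℝ) / (t - 1) - q) by field_simp; ring,
      abs_mul, Real.mul_rpow (abs_nonneg _) (abs_nonneg _)]
    ring
  · simp

section SetIntegral

variable {F : Type*} [MeasurableSpace F] {ν : Measure F} {φ : F → ℝ}

theorem abs_setIntegral_div_le [IsFiniteMeasure ν] {s : Set F} (hs : 0 < (ν s).toReal) {M : ℝ}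
    (hM : ∀ x, |φ x| ≤ M) : |(∫ x in s, φ x ∂ν) / (ν s).toReal| ≤ M := by
  rw [abs_div, abs_of_pos hs, div_le_iff₀ hs]
  exact norm_setIntegral_le_of_norm_le_const (measure_lt_top ν s) fun x _ ↦
    (Real.norm_eq_abs _).trans_le (hM x)

theorem integral_eq_mul_add_mul_setIntegral_div {B : Set F} (hB : MeasurableSet B)
    (hB0 : (ν B).toReal ≠ 0) (hBc0 : (ν Bᶜ).toReal ≠ 0) (hφ : Integrable φ ν) :
    ∫ x, φ x ∂ν = (ν B).toReal * ((∫ x in B, φ x ∂ν) / (ν B).toReal)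
      + (ν Bᶜ).toReal * ((∫ x in Bᶜ, φ x ∂ν) / (ν Bᶜ).toReal) := by
  rw [mul_div_cancel₀ _ hB0, mul_div_cancel₀ _ hBc0, integral_add_compl hB hφ]

end SetIntegral

theorem alive_conditional_mean_Lp_bound_general
    {F : Type*} [MeasurableSpace F]
    (c : ℝ) (hc0 : 0 < c)
    (p : ℝ) (hp1 : 1 ≤ p) (hp4 : p ≤ 4) :
    ∃ Cp : ℝ, 0 < Cp ∧
      ∀ (ν : Measure F), IsProbabilityMeasure ν →
      ∀ (B : Set F), MeasurableSet B →
        c ≤ min (ν B).toReal (ν Bᶜ).toReal →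
      ∀ (N : ℕ), 2 ≤ N →
      ∀ (φ : F → ℝ), Measurable φ →
      ∀ (M : ℝ), (∀ x, |φ x| ≤ M) →
        (∑' t : ℕ, if N ≤ t then
            (((t - 1).choose (N - 1) : ℝ) * (ν B).toReal ^ N
                * (1 - (ν B).toReal) ^ (t - N)) *
              |((N : ℝ) - 1) / ((t : ℝ) - 1) * ((∫ x in B, φ x ∂ν) / (ν B).toReal)
                + ((t : ℝ) - (N : ℝ)) / ((t : ℝ) - 1)
                    * ((∫ x in Bᶜ, φ x ∂ν) / (ν Bᶜ).toReal)
                - ∫ x, φ x ∂ν| ^ p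
          else 0) ^ (1 / p)
        ≤ Cp * M / Real.sqrt (N : ℝ) := by
  refine ⟨2 * 1281, by norm_num, fun ν _ B hB hcB N hN φ hφ M hM ↦ ?_⟩
  have hB0 : 0 < (ν B).toReal := hc0.trans_le (le_min_iff.mp hcB).1
  have hBc0 : 0 < (ν Bᶜ).toReal := hc0.trans_le (le_min_iff.mp hcB).2
  have hφi : Integrable φ ν :=
    .mono' (integrable_const M) hφ.aestronglyMeasurable (.of_forall fun x ↦ hM x)
  have hmean := integral_eq_mul_add_mul_setIntegral_div hB hB0.ne' hBc0.ne' hφi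
  have ha := abs_setIntegral_div_le hB0 hM
  have hb := abs_setIntegral_div_le hBc0 hM
  have hcompl : (ν Bᶜ).toReal = 1 - (ν B).toReal := probReal_compl_eq_one_sub hB
  rw [hcompl] at hBc0 hmean hb ⊢
  set q := (ν B).toReal
  have hq1 : q < 1 := by linarith
  have hS0 : 0 ≤ ∑' t, negBinomialMass N q t * |(N - 1 : ℝ) / (t - 1) - q| ^ p :=
    tsum_nonneg fun t ↦ mul_nonneg (negBinomialMass_nonneg hB0.le hq1.le N t) (by positivity)
  rw [hmean, tsum_congr (negBinomial_summand_eq hN _ _ _ p), tsum_mul_left,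
    Real.mul_rpow (by positivity) hS0, one_div, Real.rpow_rpow_inv (abs_nonneg _) (by linarith),
    ← one_div]
  calc _ ≤ (2 * M) * (1281 / √N) :=
        mul_le_mul (by linarith [abs_sub _ _ |>.trans (add_le_add ha hb)])
          (negBinomial_Lp_error_le hB0 hq1 hN hp1 hp4) (Real.rpow_nonneg hS0 _)
          (by linarith [(abs_nonneg _).trans ha])
    _ = 2 * 1281 * M / √N := by ring

/-- With `ν` a probability measure, `B` with `min(ν B, ν Bᶜ) ≥ c > 0`,
`N ≥ 2`, and `T` negative binomial with parameters `N` and `ν(B)` (i.e.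
`P(T = t) = C(t-1,N-1) ν(B)^N (1-ν(B))^(t-N)` for `t ≥ N`): for every `p ∈ [1,4]`
there exists `C_p` depending only on `p` and `c` such that
`E[ |((N-1)/(T-1))·ν(1_B φ)/ν(B) + ((T-N)/(T-1))·ν(1_{Bᶜ} φ)/ν(Bᶜ) − ν(φ)|^p ]^(1/p)
  ≤ C_p ‖φ‖_∞ / √N` for all bounded measurable `φ`. -/
theorem alive_conditional_mean_Lp_bound
    {F : Type*} [MeasurableSpace F]
    (c : ℝ) (hc0 : 0 < c) (hc1 : c < 1)
    (p : ℝ) (hp1 : 1 ≤ p) (hp4 : p ≤ 4) :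
    ∃ Cp : ℝ, 0 < Cp ∧
      ∀ (ν : Measure F), IsProbabilityMeasure ν →
      ∀ (B : Set F), MeasurableSet B →
        c ≤ min (ν B).toReal (ν Bᶜ).toReal →
      ∀ (N : ℕ), 2 ≤ N →
      ∀ (φ : F → ℝ), Measurable φ →
      ∀ (M : ℝ), (∀ x, |φ x| ≤ M) →
        (∑' t : ℕ, if N ≤ t then
            (((t - 1).choose (N - 1) : ℝ) * (ν B).toReal ^ N
                * (1 - (ν B).toReal) ^ (t - N)) *
              |((N : ℝ) - 1) / ((t : ℝ) - 1) * ((∫ x in B, φ x ∂ν) / (ν B).toReal)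
                + ((t : ℝ) - (N : ℝ)) / ((t : ℝ) - 1)
                    * ((∫ x in Bᶜ, φ x ∂ν) / (ν Bᶜ).toReal)
                - ∫ x, φ x ∂ν| ^ p
          else 0) ^ (1 / p)
        ≤ Cp * M / Real.sqrt (N : ℝ) :=
  alive_conditional_mean_Lp_bound_general c hc0 p hp1 hp4
end

section
/- Let X^1, X^2, ... be i.i.d. with law ν on a measurable space, B a set with q := ν(B) ∈ (0,1), N ≥ 2, and T = inf{n : Σ_{i≤n} 1_B(X^i) ≥ N}. Conditional on T = t, the positions of the N successes among the first t trials are: trial t is a success, and the remaining N−1 successes are uniformly distributed among the first t−1 trials; moreover, conditional on T and the success/failure pattern, the samples in B are i.i.d. with law ν(· ∩ B)/ν(B) and the samples in B^c are i.i.d. with law ν(· ∩ B^c)/ν(B^c). -/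
/-!
Once the pattern of successes among the first `t - 1` trials is fixed to a set `S` of size
`N - 1`, the stopping rule is decided by trial `t - 1` alone: `T = t` exactly when it is a
success. So the event in question is the cylinder `⋂_{i < t} {X i ∈ C i}` with
`C i = A i ∩ B` or `A i ∩ Bᶜ` according to the pattern, and independence with common law `ν`
factorises its probability.
-/

open MeasureTheory ProbabilityTheory
open scoped Classical

theorem sInf_le_count_eq_succ_iff {p : ℕ → Prop} [DecidablePred p] {N m : ℕ}
    (hm : Nat.count p m + 1 = N) : sInf {n | N ≤ Nat.count p n} = m + 1 ↔ p m := by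
  rw [Nat.sInf_upward_closed_eq_succ_iff
    (s := {n | N ≤ Nat.count p n}) fun _ _ hle hk => le_trans hk (Nat.count_monotone p hle)]
  simp only [Set.mem_ofPred_eq, Nat.count_succ]
  split_ifs with h <;> simp only [h, iff_true, iff_false, not_and_or, not_le] <;> omega

theorem count_eq_card_of_forall_lt_iff_mem {p : ℕ → Prop} [DecidablePred p] {m : ℕ}
    {S : Finset ℕ} (hS : S ⊆ Finset.range m) (hp : ∀ i < m, p i ↔ i ∈ S) :
    Nat.count p m = S.card := by
  rw [Nat.count_eq_card_filter_range]
  congr 1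
  ext i
  simp only [Finset.mem_filter, Finset.mem_range]
  exact ⟨fun ⟨hi, hpi⟩ => (hp i hi).1 hpi,
    fun hiS => ⟨Finset.mem_range.1 (hS hiS), (hp _ (Finset.mem_range.1 (hS hiS))).2 hiS⟩⟩

def patternSet {F : Type*} (B : Set F) (S : Finset ℕ) (A : ℕ → Set F) (i : ℕ) : Set F :=
  if i ∈ S then A i ∩ B else A i ∩ Bᶜ

section Pattern

variable {F : Type*} {B : Set F} {S : Finset ℕ} {A : ℕ → Set F}

theorem mem_patternSet_iff {x : F} {i : ℕ} :
    x ∈ patternSet B S A i ↔ x ∈ A i ∧ (x ∈ B ↔ i ∈ S) := by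
  unfold patternSet
  split_ifs with hi <;> simp [hi]

theorem measurableSet_patternSet [MeasurableSpace F] (hB : MeasurableSet B)
    (hA : ∀ i, MeasurableSet (A i)) (i : ℕ) : MeasurableSet (patternSet B S A i) := by
  unfold patternSet
  split_ifs
  exacts [(hA i).inter hB, (hA i).inter hB.compl]

theorem sInf_le_count_eq_succ_and_pattern_iff {x : ℕ → F} {m N : ℕ} (hS : S ⊆ Finset.range m)
    (hN : S.card + 1 = N) :
    (sInf {n | N ≤ Nat.count (fun i => x i ∈ B) n} = m + 1 ∧ (∀ i < m, x i ∈ B ↔ i ∈ S) ∧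
        ∀ i < m + 1, x i ∈ A i) ↔
      ∀ i < m + 1, x i ∈ Function.update (patternSet B S A) m (A m ∩ B) i := by
  have hpattern : ∀ i < m, x i ∈ Function.update (patternSet B S A) m (A m ∩ B) i ↔
      x i ∈ A i ∧ (x i ∈ B ↔ i ∈ S) := fun i hi => by
    rw [Function.update_of_ne hi.ne, mem_patternSet_iff]
  simp only [Nat.forall_lt_succ_right, Function.update_self]
  constructor
  · rintro ⟨hT, hpat, hA, hAm⟩
    have hcount := count_eq_card_of_forall_lt_iff_mem hS hpat
    exact ⟨fun i hi => (hpattern i hi).2 ⟨hA i hi, hpat i hi⟩, hAm,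
      (sInf_le_count_eq_succ_iff (hcount ▸ hN)).1 hT⟩
  · rintro ⟨h, hAm, hBm⟩
    have hpat : ∀ i < m, x i ∈ B ↔ i ∈ S := fun i hi => ((hpattern i hi).1 (h i hi)).2
    have hcount := count_eq_card_of_forall_lt_iff_mem hS hpat
    exact ⟨(sInf_le_count_eq_succ_iff (hcount ▸ hN)).2 hBm, hpat,
      fun i hi => ((hpattern i hi).1 (h i hi)).1, hAm⟩

end Pattern

theorem iIndepFun.measure_biInter_preimage_eq_prod {ι Ω F : Type*} [MeasurableSpace Ω]
    [MeasurableSpace F] {μ : Measure Ω} {ν : Measure F} {X : ι → Ω → F}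
    (hXm : ∀ i, Measurable (X i)) (hindep : iIndepFun X μ) (hlaw : ∀ i, μ.map (X i) = ν)
    {C : ι → Set F} (hC : ∀ i, MeasurableSet (C i)) (s : Finset ι) :
    μ (⋂ i ∈ s, X i ⁻¹' C i) = ∏ i ∈ s, ν (C i) := by
  rw [hindep.meas_biInter fun i _ => ⟨C i, hC i, rfl⟩]
  refine Finset.prod_congr rfl fun i _ => ?_
  rw [← hlaw i, Measure.map_apply (hXm i) (hC i)]

theorem alive_conditional_distribution_general
    {F : Type*} [MeasurableSpace F] {Ω : Type*} [MeasurableSpace Ω]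
    (μ : Measure Ω)
    (ν : Measure F)
    (X : ℕ → Ω → F) (hXm : ∀ i, Measurable (X i))
    (hindep : iIndepFun X μ)
    (hlaw : ∀ i, Measure.map (X i) μ = ν)
    (B : Set F) (hB : MeasurableSet B)
    (N : ℕ) (hN : 2 ≤ N)
    (T : Ω → ℕ)
    (hT : ∀ ω, T ω =
      sInf {n : ℕ | N ≤ ((Finset.range n).filter (fun i => X i ω ∈ B)).card}) :
    ∀ (t : ℕ), N ≤ t →
    ∀ (S : Finset ℕ), S ⊆ Finset.range (t - 1) → S.card = N - 1 →
    ∀ (A : ℕ → Set F), (∀ i, MeasurableSet (A i)) →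
      μ {ω | T ω = t ∧ (∀ i < t - 1, (X i ω ∈ B ↔ i ∈ S)) ∧ ∀ i < t, X i ω ∈ A i}
        = ν (A (t - 1) ∩ B) *
            ∏ i ∈ Finset.range (t - 1),
              (if i ∈ S then ν (A i ∩ B) else ν (A i ∩ Bᶜ)) := by
  intro t ht S hS hcard A hA
  obtain ⟨m, rfl⟩ : ∃ m, t = m + 1 := Nat.exists_eq_add_one.2 (by omega)
  rw [Nat.add_sub_cancel] at hS ⊢
  set C := Function.update (patternSet B S A) m (A m ∩ B)
  have hC : ∀ i, MeasurableSet (C i) := by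
    intro i
    rcases eq_or_ne i m with rfl | hi
    · simpa [C] using (hA i).inter hB
    · simpa [C, Function.update_of_ne hi] using measurableSet_patternSet hB hA i
  have hevent : {ω | T ω = m + 1 ∧ (∀ i < m, (X i ω ∈ B ↔ i ∈ S)) ∧ ∀ i < m + 1, X i ω ∈ A i}
      = ⋂ i ∈ Finset.range (m + 1), X i ⁻¹' C i := by
    ext ω
    simp only [Set.mem_ofPred_eq, hT, ← Nat.count_eq_card_filter_range, Set.mem_iInter,
      Set.mem_preimage, Finset.mem_range]
    exact sInf_le_count_eq_succ_and_pattern_iff hS (by omega)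
  rw [hevent, iIndepFun.measure_biInter_preimage_eq_prod hXm hindep hlaw hC,
    Finset.prod_range_succ, mul_comm]
  congr 1
  · simp [C]
  · refine Finset.prod_congr rfl fun i hi => ?_
    simp only [C, Function.update_of_ne (Finset.mem_range.1 hi).ne, patternSet, apply_ite ν]

/-- Let `X 0, X 1, ...` be i.i.d. with law `ν`, `B` with
`q = ν(B) ∈ (0,1)`, `N ≥ 2`, and `T = inf{n : #{i < n : X i ∈ B} ≥ N}`.  Conditional
on `T = t`: trial `t` (index `t-1`) is a success, the remaining `N-1` successes form a
uniformly distributed pattern `S` among the first `t-1` trials, and given the pattern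
the samples in `B` are i.i.d. with law `ν(· ∩ B)/ν(B)` while those in `Bᶜ` are i.i.d.
with law `ν(· ∩ Bᶜ)/ν(Bᶜ)`.  This is encoded by the finite-dimensional identity:
for every `t ≥ N`, every pattern `S ⊆ {0,...,t-2}` with `|S| = N-1` and measurable
sets `A i`,
`μ(T = t, pattern = S, X i ∈ A i ∀ i < t)
  = ν(A (t-1) ∩ B) · ∏_{i<t-1} (ν(A i ∩ B) if i ∈ S else ν(A i ∩ Bᶜ))`. -/
theorem alive_conditional_distribution
    {F : Type*} [MeasurableSpace F] {Ω : Type*} [MeasurableSpace Ω]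
    (μ : Measure Ω) [IsProbabilityMeasure μ]
    (ν : Measure F) [IsProbabilityMeasure ν]
    (X : ℕ → Ω → F) (hXm : ∀ i, Measurable (X i))
    (hindep : iIndepFun X μ)
    (hlaw : ∀ i, Measure.map (X i) μ = ν)
    (B : Set F) (hB : MeasurableSet B) (hB0 : 0 < ν B) (hB1 : ν B < 1)
    (N : ℕ) (hN : 2 ≤ N)
    (T : Ω → ℕ)
    (hT : ∀ ω, T ω =
      sInf {n : ℕ | N ≤ ((Finset.range n).filter (fun i => X i ω ∈ B)).card}) :
    ∀ (t : ℕ), N ≤ t →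
    ∀ (S : Finset ℕ), S ⊆ Finset.range (t - 1) → S.card = N - 1 →
    ∀ (A : ℕ → Set F), (∀ i, MeasurableSet (A i)) →
      μ {ω | T ω = t ∧ (∀ i < t - 1, (X i ω ∈ B ↔ i ∈ S)) ∧ ∀ i < t, X i ω ∈ A i}
        = ν (A (t - 1) ∩ B) *
            ∏ i ∈ Finset.range (t - 1),
              (if i ∈ S then ν (A i ∩ B) else ν (A i ∩ Bᶜ)) :=
  alive_conditional_distribution_general μ ν X hXm hindep hlaw B hB N hN T hT
end

section
/- Martingale-difference decomposition: with γ_n^{T_n}(φ) as in the alive particle filter and Φ_p the Feynman–Kac one-step map Φ_p(μ)(φ) = μ(G_{p-1} M_p(φ))/μ(G_{p-1}), one has the telescoping identity γ_n^{T_n}(φ) − γ_n(φ) = Σ_{p=1}^n γ_p^{T_p}(1) [η_p^{T_p} − Φ_p(η_{p-1}^{T_{p-1}})](Q_{p,n}(φ)), where Q_{p,n} is the Feynman–Kac semigroup Q_{p,n}(φ)(x_p) = ∫ Q_{p+1}(x_p,dx_{p+1})···Q_n(x_{n-1},dx_n)φ(x_n) with Q_k(x,dy) = G_{k-1}(x)M_k(x,dy),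 and with the conventions Φ_1(η_0^{T_0}) = η_1 and Q_{n,n} = Id. -/
/-!
Write `F₀ = γ_n(φ)` and `F_p = γ_p^{T_p}(1) η_p^{T_p}(Q_{p,n}φ)` for `p ≥ 1`; the claimed sum
telescopes to `F_n − F₀`. The `p`-th summand is `F_p − F_{p-1}`: for `p = 1` because
`γ_1(Q_{1,n}φ) = γ_n(φ)`, and for `p ≥ 2` because `Q_{p-1,n} = Q_p Q_{p,n}` and exactly `N − 1`
of the `T_{p-1} − 1` particles at time `p − 1` are alive, so the normalising constant of
`Φ_p(η_{p-1}^{T_{p-1}})` is `η_{p-1}^{T_{p-1}}(G_{p-1}) = (N − 1)/(T_{p-1} − 1)`, which is exactly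
the ratio `γ_p^{T_p}(1)/γ_{p-1}^{T_{p-1}}(1)`.
-/

open MeasureTheory ProbabilityTheory
open scoped Classical

/-- The unnormalized Feynman–Kac measure `γ_n(φ)` (convention `B 0 = univ`). -/
noncomputable def fkGamma {E : Type*} [MeasurableSpace E]
    (M : ℕ → ProbabilityTheory.Kernel E E) (B : ℕ → Set E) (x0 : E) :
    ℕ → (E → ℝ) → ℝ
  | 0, φ => φ x0
  | n + 1, φ =>
      fkGamma M B x0 n (fun x => (B n).indicator (fun z => ∫ y, φ y ∂(M (n + 1) z)) x)

/-- Auxiliary iterate: `fkQAux p k φ = Q_{p,p+k}(φ)` where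
`Q_k(x,dy) = 1_{B (k-1)}(x) M_k(x,dy)`. -/
noncomputable def fkQAux {E : Type*} [MeasurableSpace E]
    (M : ℕ → ProbabilityTheory.Kernel E E) (B : ℕ → Set E) :
    ℕ → ℕ → (E → ℝ) → E → ℝ
  | _, 0, φ => φ
  | p, k + 1, φ => fun x =>
      (B p).indicator (fun z => ∫ y, fkQAux M B (p + 1) k φ y ∂(M (p + 1) z)) x

/-- The Feynman–Kac semigroup `Q_{p,n}(φ)`, with `Q_{n,n} = Id`. -/
noncomputable def fkQ {E : Type*} [MeasurableSpace E]
    (M : ℕ → ProbabilityTheory.Kernel E E) (B : ℕ → Set E)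
    (p n : ℕ) (φ : E → ℝ) : E → ℝ :=
  fkQAux M B p (n - p) φ

/-- `η_p^{T_p}(φ)`. -/
noncomputable def aliveEta {E Ω : Type*} (X : ℕ → ℕ → Ω → E) (T : ℕ → Ω → ℕ)
    (p : ℕ) (φ : E → ℝ) (ω : Ω) : ℝ :=
  (1 / ((T p ω : ℝ) - 1)) * ∑ i ∈ Finset.range (T p ω - 1), φ (X p i ω)

/-- `γ_p^{T_p}(1) = Π_{q=1}^{p-1} (N-1)/(T_q−1)`. -/
noncomputable def aliveGammaProd {Ω : Type*} (N : ℕ) (T : ℕ → Ω → ℕ)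
    (n : ℕ) (ω : Ω) : ℝ :=
  ∏ p ∈ Finset.Icc 1 (n - 1), ((N : ℝ) - 1) / ((T p ω : ℝ) - 1)

/-- `Φ_p(η_{p-1}^{T_{p-1}})(φ)`. -/
noncomputable def alivePhi {E Ω : Type*} [MeasurableSpace E]
    (M : ℕ → ProbabilityTheory.Kernel E E) (B : ℕ → Set E)
    (X : ℕ → ℕ → Ω → E) (T : ℕ → Ω → ℕ) (p : ℕ) (φ : E → ℝ) (ω : Ω) : ℝ :=
  (∑ i ∈ Finset.range (T (p - 1) ω - 1),
      (B (p - 1)).indicator (fun z => ∫ y, φ y ∂(M p z)) (X (p - 1) i ω)) /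
    (∑ i ∈ Finset.range (T (p - 1) ω - 1),
      (B (p - 1)).indicator (fun _ => (1 : ℝ)) (X (p - 1) i ω))

open Finset

section FeynmanKac

variable {E : Type*} [MeasurableSpace E] (M : ℕ → ProbabilityTheory.Kernel E E) (B : ℕ → Set E)

lemma fkGamma_fkQAux (x0 : E) (k m : ℕ) (φ : E → ℝ) :
    fkGamma M B x0 m (fkQAux M B m k φ) = fkGamma M B x0 (m + k) φ := by
  induction k generalizing m with
  | zero => rfl
  | succ k ih =>
    rw [show m + (k + 1) = m + 1 + k by omega, ← ih (m + 1)]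
    rfl

lemma fkGamma_one_fkQ (x0 : E) {n : ℕ} (hn : 1 ≤ n) (φ : E → ℝ) :
    fkGamma M B x0 1 (fkQ M B 1 n φ) = fkGamma M B x0 n φ := by
  rw [fkQ, fkGamma_fkQAux, Nat.add_sub_cancel' hn]

@[simp]
lemma fkQ_self (n : ℕ) (φ : E → ℝ) : fkQ M B n n φ = φ := by
  simp only [fkQ, Nat.sub_self]
  rfl

lemma indicator_integral_fkQ_succ {q n : ℕ} (hqn : q < n) (φ : E → ℝ) (x : E) :
    (B q).indicator (fun z => ∫ y, fkQ M B (q + 1) n φ y ∂(M (q + 1) z)) x = fkQ M B q n φ x := by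
  rw [fkQ, fkQ, show n - q = n - (q + 1) + 1 by omega]
  rfl

end FeynmanKac

section AliveParticleFilter

variable {E Ω : Type*} (N : ℕ) (T : ℕ → Ω → ℕ) (X : ℕ → ℕ → Ω → E)

@[simp]
lemma aliveGammaProd_one (ω : Ω) : aliveGammaProd N T 1 ω = 1 := by
  simp [aliveGammaProd]

lemma aliveGammaProd_succ {q : ℕ} (hq : 1 ≤ q) (ω : Ω) :
    aliveGammaProd N T (q + 1) ω =
      aliveGammaProd N T q ω * (((N : ℝ) - 1) / ((T q ω : ℝ) - 1)) := by
  rw [aliveGammaProd, aliveGammaProd, Nat.add_sub_cancel]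
  conv_lhs => rw [← Nat.sub_add_cancel hq]
  rw [prod_Icc_succ_top (by omega), Nat.sub_add_cancel hq]

lemma alivePhi_succ [MeasurableSpace E] (M : ℕ → ProbabilityTheory.Kernel E E) (B : ℕ → Set E)
    (q : ℕ) (ψ : E → ℝ) (ω : Ω) :
    alivePhi M B X T (q + 1) ψ ω =
      ((T q ω : ℝ) - 1) / #{i ∈ range (T q ω - 1) | X q i ω ∈ B q} *
        aliveEta X T q (fun x => (B q).indicator (fun z => ∫ y, ψ y ∂(M (q + 1) z)) x) ω := by
  have hcard : (∑ i ∈ range (T q ω - 1), (B q).indicator (fun _ => (1 : ℝ)) (X q i ω)) =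
      #{i ∈ range (T q ω - 1) | X q i ω ∈ B q} := by
    simp [Set.indicator_apply]
  rw [alivePhi, aliveEta, Nat.add_sub_cancel, hcard]
  rcases Nat.lt_or_ge (T q ω) 2 with hT | hT
  · simp [Nat.sub_eq_zero_of_le (Nat.le_of_lt_succ hT)]
  · have hT1 : (T q ω : ℝ) - 1 ≠ 0 := by
      have : (2 : ℝ) ≤ T q ω := by exact_mod_cast hT
      linarith
    field_simp

lemma aliveGammaProd_succ_mul_alivePhi [MeasurableSpace E]
    (M : ℕ → ProbabilityTheory.Kernel E E) (B : ℕ → Set E) (hN : 2 ≤ N) {q n : ℕ} (hq : 1 ≤ q)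
    (hqn : q < n) (φ : E → ℝ) (ω : Ω) (hT : N ≤ T q ω)
    (halive : #{i ∈ range (T q ω - 1) | X q i ω ∈ B q} = N - 1) :
    aliveGammaProd N T (q + 1) ω * alivePhi M B X T (q + 1) (fkQ M B (q + 1) n φ) ω =
      aliveGammaProd N T q ω * aliveEta X T q (fkQ M B q n φ) ω := by
  have hNR : (2 : ℝ) ≤ N := by exact_mod_cast hN
  have hTR : (N : ℝ) ≤ T q ω := by exact_mod_cast hT
  have hN1 : (N : ℝ) - 1 ≠ 0 := by linarith
  have hT1 : (T q ω : ℝ) - 1 ≠ 0 := by linarith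
  rw [aliveGammaProd_succ N T hq, alivePhi_succ, halive, Nat.cast_sub (by omega), Nat.cast_one]
  simp only [indicator_integral_fkQ_succ M B hqn]
  field_simp

end AliveParticleFilter

lemma sum_Icc_one_sub_pred {G : Type*} [AddCommGroup G] (F : ℕ → G) {n : ℕ} (hn : 1 ≤ n) :
    ∑ p ∈ Icc 1 n, (F p - F (p - 1)) = F n - F 0 := by
  simpa using sum_Icc_sub (f := fun p => F (p - 1)) hn

theorem alive_filter_martingale_decomposition_general
    {E Ω : Type*} [MeasurableSpace E]
    (M : ℕ → ProbabilityTheory.Kernel E E)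
    (B : ℕ → Set E)
    (x0 : E) (N : ℕ) (hN : 2 ≤ N)
    (X : ℕ → ℕ → Ω → E) (T : ℕ → Ω → ℕ)
    (hTN : ∀ p ω, 1 ≤ p → N ≤ T p ω)
    (halive : ∀ p ω, 1 ≤ p →
      ((Finset.range (T p ω - 1)).filter (fun i => X p i ω ∈ B p)).card = N - 1)
    (n : ℕ) (hn : 1 ≤ n) (φ : E → ℝ) :
    ∀ ω,
      aliveGammaProd N T n ω * aliveEta X T n φ ω - fkGamma M B x0 n φ
        = ∑ p ∈ Finset.Icc 1 n,
            aliveGammaProd N T p ω *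
              (aliveEta X T p (fkQ M B p n φ) ω -
                if p = 1 then fkGamma M B x0 1 (fkQ M B 1 n φ)
                else alivePhi M B X T p (fkQ M B p n φ) ω) := by
  intro ω
  set F : ℕ → ℝ := fun p =>
    if p = 0 then fkGamma M B x0 n φ else aliveGammaProd N T p ω * aliveEta X T p (fkQ M B p n φ) ω
  calc _ = F n - F 0 := by simp [F, Nat.pos_iff_ne_zero.mp hn]
    _ = ∑ p ∈ Icc 1 n, (F p - F (p - 1)) := (sum_Icc_one_sub_pred F hn).symm
    _ = _ := sum_congr rfl fun p hp => ?_
  obtain ⟨hp1, hpn⟩ := mem_Icc.mp hp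
  obtain ⟨q, rfl⟩ : ∃ q, p = q + 1 := ⟨p - 1, by omega⟩
  rcases Nat.eq_zero_or_pos q with rfl | hq
  · simp [F, fkGamma_one_fkQ M B x0 hn]
  · have hstep := aliveGammaProd_succ_mul_alivePhi N T X M B hN hq (show q < n by omega) φ ω
      (hTN q ω hq) (halive q ω hq)
    simp only [F, Nat.add_sub_cancel, if_neg (by omega : q + 1 ≠ 1), if_neg (by omega : q ≠ 0),
      if_neg (by omega : q + 1 ≠ 0)]
    rw [mul_sub, hstep]

/-- martingale-difference decomposition: with
`γ_n^{T_n}(φ) = γ_n^{T_n}(1) η_n^{T_n}(φ)` as in the alive particle filter and `Φ_p`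
the one-step Feynman–Kac map, one has the telescoping identity
`γ_n^{T_n}(φ) − γ_n(φ) = Σ_{p=1}^n γ_p^{T_p}(1) [η_p^{T_p} − Φ_p(η_{p-1}^{T_{p-1}})](Q_{p,n}(φ))`,
with the conventions `Φ_1(η_0^{T_0}) = η_1` (the true predictor, i.e. `γ_1`) and
`Q_{n,n} = Id`. -/
theorem alive_filter_martingale_decomposition
    {E Ω : Type*} [MeasurableSpace E]
    (M : ℕ → ProbabilityTheory.Kernel E E) (hM : ∀ p, IsMarkovKernel (M p))
    (B : ℕ → Set E) (hBmeas : ∀ p, MeasurableSet (B p)) (hB0 : B 0 = Set.univ)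
    (x0 : E) (N : ℕ) (hN : 2 ≤ N)
    (X : ℕ → ℕ → Ω → E) (T : ℕ → Ω → ℕ)
    (hTN : ∀ p ω, 1 ≤ p → N ≤ T p ω)
    (halive : ∀ p ω, 1 ≤ p →
      ((Finset.range (T p ω - 1)).filter (fun i => X p i ω ∈ B p)).card = N - 1)
    (n : ℕ) (hn : 1 ≤ n) (φ : E → ℝ) (hφm : Measurable φ)
    (hφb : ∃ C, ∀ x, |φ x| ≤ C) :
    ∀ ω,
      aliveGammaProd N T n ω * aliveEta X T n φ ω - fkGamma M B x0 n φ
        = ∑ p ∈ Finset.Icc 1 n,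
            aliveGammaProd N T p ω *
              (aliveEta X T p (fkQ M B p n φ) ω -
                if p = 1 then fkGamma M B x0 1 (fkQ M B 1 n φ)
                else alivePhi M B X T p (fkQ M B p n φ) ω) :=
  alive_filter_martingale_decomposition_general M B x0 N hN X T hTN halive n hn φ
end

section
/- Conditional unbiasedness of the one-step empirical measure: in the alive particle filter, for n ≥ 1, N ≥ 2, and bounded measurable φ, E[η_n^{T_n}(φ) | 𝓕_{n-1}] = Φ_n(η_{n-1}^{T_{n-1}})(φ) almost surely, where 𝓕_{n-1} is the σ-algebra generated by the particle system up to time n−1. -/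
open MeasureTheory ProbabilityTheory
open scoped Classical

/-!
Conditionally on the past, the samples are i.i.d. with law `κ ω₀`, so `ν ω₀` is the product
measure and the conditional expectation given `σ(fst)` is the integral against it. On the event
`{T = t + 1}` the first `t` samples contain exactly `N - 1` hits and sample `t` is a hit, so the
event is invariant under permutations of the first `t` coordinates. Hence each `φ (f i)`, `i < t`,
has the same integral over it as `φ (f 0)`, and so does their average, which is the estimator
there. Summing over `t` (`T` is a.s. finite because `κ ω₀ B > 0`) leaves `∫ φ (f 0) = ∫ φ dκ ω₀`.
-/

theorem integral_eq_tsum_setIntegral_fiber {α ι F : Type*} [MeasurableSpace α] [MeasurableSpace ι]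
    [Countable ι] [MeasurableSingletonClass ι] [NormedAddCommGroup F] [NormedSpace ℝ F]
    {μ : Measure α} {τ : α → ι} (hτ : Measurable τ) {g : α → F} (hg : Integrable g μ) :
    ∫ x, g x ∂μ = ∑' i, ∫ x in τ ⁻¹' {i}, g x ∂μ := by
  rw [← integral_iUnion (fun i => hτ (measurableSet_singleton i)) (pairwise_disjoint_fiber τ)
    hg.integrableOn, ← Set.preimage_iUnion, Set.iUnion_of_singleton, Set.preimage_univ,
    setIntegral_univ]

theorem condExp_comap_fst_compProd {α β F : Type*} [MeasurableSpace α] [MeasurableSpace β]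
    [NormedAddCommGroup F] [NormedSpace ℝ F] [CompleteSpace F]
    (μ : Measure α) [IsFiniteMeasure μ] (κ : Kernel α β) [IsMarkovKernel κ]
    {f : α × β → F} (hf : Integrable f (μ ⊗ₘ κ)) (hfm : StronglyMeasurable f) :
    (μ ⊗ₘ κ)[f | MeasurableSpace.comap Prod.fst inferInstance]
      =ᵐ[μ ⊗ₘ κ] fun ω => ∫ y, f (ω.1, y) ∂κ ω.1 := by
  have hGm : StronglyMeasurable fun x => ∫ y, f (x, y) ∂κ x :=
    hfm.integral_kernel_prod_right'
  have hG : Integrable (fun x => ∫ y, f (x, y) ∂κ x) μ := by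
    simpa [Measure.compProd] using hf.integral_compProd
  have hGfst : Integrable (fun ω : α × β => ∫ y, f (ω.1, y) ∂κ ω.1) (μ ⊗ₘ κ) := by
    rw [← Measure.fst_compProd μ κ] at hG
    exact (integrable_map_measure hGm.aestronglyMeasurable measurable_fst.aemeasurable).1 hG
  refine (ae_eq_condExp_of_forall_setIntegral_eq measurable_fst.comap_le hf
    (fun _ _ _ => hGfst.integrableOn) ?_ ?_).symm
  · rintro _ ⟨u, hu, rfl⟩ _
    rw [← Set.prod_univ, Measure.setIntegral_compProd hu .univ hGfst.integrableOn,
      Measure.setIntegral_compProd hu .univ hf.integrableOn]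
    simp
  · exact (hGm.comp_measurable (Measurable.of_comap_le le_rfl)).aestronglyMeasurable

section HittingTime

variable {E : Type*}

noncomputable def successCount (B : Set E) (n : ℕ) (f : ℕ → E) : ℕ :=
  ((Finset.range n).filter (fun i => f i ∈ B)).card

/-- Since `sInf ∅ = 0`, the value `0` also stands for "fewer than `N` hits in total". -/
noncomputable def hittingTime (B : Set E) (N : ℕ) (f : ℕ → E) : ℕ :=
  sInf {n : ℕ | N ≤ successCount B n f}

/-- The paper's `η_n^{T_n}(φ)`. -/
noncomputable def hittingMean (B : Set E) (N : ℕ) (φ : E → ℝ) (f : ℕ → E) : ℝ :=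
  (1 / ((hittingTime B N f : ℝ) - 1)) * ∑ i ∈ Finset.range (hittingTime B N f - 1), φ (f i)

section Counting

variable {B : Set E} {N : ℕ} {f : ℕ → E}

lemma successCount_le (n : ℕ) : successCount B n f ≤ n :=
  (Finset.card_filter_le _ _).trans (Finset.card_range n).le

lemma successCount_mono : Monotone fun n => successCount B n f := fun _ _ h =>
  Finset.card_le_card (Finset.filter_subset_filter _ (Finset.range_subset_range.2 h))

lemma successCount_succ_of_mem {n : ℕ} (h : f n ∈ B) :
    successCount B (n + 1) f = successCount B n f + 1 := by
  rw [successCount, Finset.range_add_one, Finset.filter_insert, if_pos h,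
    Finset.card_insert_of_notMem (by simp)]
  rfl

lemma successCount_comp_perm {n : ℕ} {σ : Equiv.Perm ℕ} (hσ : ∀ i, σ i ≠ i → i < n) :
    successCount B n (f ∘ σ) = successCount B n f := by
  simp only [successCount, Finset.card_filter]
  exact σ.sum_comp _ (fun i => if f i ∈ B then 1 else 0) fun i hi => Finset.mem_range.2 (hσ i hi)

lemma hittingTime_eq_succ_iff (t : ℕ) :
    hittingTime B N f = t + 1 ↔ N ≤ successCount B (t + 1) f ∧ successCount B t f < N := by
  rw [hittingTime, Nat.sInf_upward_closed_eq_succ_iff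
    fun _ _ hk hN => hN.trans (successCount_mono hk)]
  simp

lemma le_hittingTime (h : hittingTime B N f ≠ 0) : N ≤ hittingTime B N f := by
  obtain ⟨t, ht⟩ := Nat.exists_eq_succ_of_ne_zero h
  rw [ht]
  exact ((hittingTime_eq_succ_iff t).1 ht).1.trans (successCount_le _)

lemma exists_forall_ge_notMem_of_hittingTime_eq_zero (hN : N ≠ 0)
    (h : hittingTime B N f = 0) : ∃ M, ∀ i, M ≤ i → f i ∉ B := by
  have hlt : ∀ n, successCount B n f < N := by
    rw [hittingTime, Nat.sInf_eq_zero] at h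
    rcases h with h | h
    · exact absurd (Nat.le_zero.1 h) hN
    · simpa [Set.eq_empty_iff_forall_notMem] using h
  by_contra! hinf
  have hunbdd : ∀ k, ∃ n, k ≤ successCount B n f := by
    intro k
    induction k with
    | zero => exact ⟨0, Nat.zero_le _⟩
    | succ k ih =>
      obtain ⟨n, hn⟩ := ih
      obtain ⟨i, hni, hiB⟩ := hinf n
      refine ⟨i + 1, ?_⟩
      rw [successCount_succ_of_mem hiB]
      exact Nat.succ_le_succ (hn.trans (successCount_mono hni))
  obtain ⟨n, hn⟩ := hunbdd N
  exact (hlt n).not_ge hn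

lemma hittingTime_comp_perm_eq_succ_iff {t : ℕ} {σ : Equiv.Perm ℕ}
    (hσ : ∀ i, σ i ≠ i → i < t) :
    hittingTime B N (f ∘ σ) = t + 1 ↔ hittingTime B N f = t + 1 := by
  simp only [hittingTime_eq_succ_iff, successCount_comp_perm hσ,
    successCount_comp_perm fun i hi => (hσ i hi).trans t.lt_succ_self]

lemma abs_hittingMean_le {φ : E → ℝ} {C : ℝ} (hC : 0 ≤ C) (hφC : ∀ x, |φ x| ≤ C)
    (f : ℕ → E) : |hittingMean B N φ f| ≤ C := by
  rcases le_or_gt (hittingTime B N f) 1 with h | h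
  · simp [hittingMean, Nat.sub_eq_zero_of_le h, hC]
  · have hpos : (0 : ℝ) < (hittingTime B N f - 1 : ℕ) := by exact_mod_cast Nat.sub_pos_of_lt h
    rw [hittingMean, ← Nat.cast_pred (by omega), abs_mul, abs_of_pos (by positivity), one_div,
      inv_mul_le_iff₀ hpos]
    calc |∑ i ∈ Finset.range (hittingTime B N f - 1), φ (f i)|
        ≤ ∑ i ∈ Finset.range (hittingTime B N f - 1), |φ (f i)| := Finset.abs_sum_le_sum_abs _ _
      _ ≤ (hittingTime B N f - 1 : ℕ) * C := by
        simpa using Finset.sum_le_card_nsmul (Finset.range _) _ C fun i _ => hφC (f i)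

end Counting

section Measurability

variable [MeasurableSpace E] {B : Set E}

lemma measurable_successCount (hB : MeasurableSet B) (n : ℕ) :
    Measurable (successCount B n) := by
  have hsum : successCount B n = fun f => ∑ i ∈ Finset.range n, if f i ∈ B then 1 else 0 :=
    funext fun f => Finset.card_filter _ _
  rw [hsum]
  exact Finset.measurable_sum _ fun i _ =>
    Measurable.ite (measurable_pi_apply i hB) measurable_const measurable_const

lemma measurable_hittingTime (hB : MeasurableSet B) (N : ℕ) :
    Measurable (hittingTime B N) := by
  have hsucc (t : ℕ) : MeasurableSet (hittingTime B N ⁻¹' {t + 1}) := by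
    simp only [Set.preimage, Set.mem_singleton_iff, hittingTime_eq_succ_iff]
    exact (measurableSet_le measurable_const (measurable_successCount hB _)).inter
      (measurableSet_lt (measurable_successCount hB _) measurable_const)
  refine measurable_to_countable' fun t => ?_
  rcases t with _ | t
  · have hzero : hittingTime B N ⁻¹' {0} = (⋃ t, hittingTime B N ⁻¹' {t + 1})ᶜ := by
      ext f
      simp only [Set.mem_preimage, Set.mem_singleton_iff, Set.mem_compl_iff, Set.mem_iUnion,
        not_exists]
      generalize hittingTime B N f = n
      cases n <;> simp
    rw [hzero]
    exact (MeasurableSet.iUnion hsucc).compl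
  · exact hsucc t

lemma measurable_hittingMean (hB : MeasurableSet B) (N : ℕ) {φ : E → ℝ} (hφ : Measurable φ) :
    Measurable (hittingMean B N φ) := by
  have hpair : Measurable fun p : (ℕ → E) × ℕ =>
      (1 / ((p.2 : ℝ) - 1)) * ∑ i ∈ Finset.range (p.2 - 1), φ (p.1 i) :=
    measurable_from_prod_countable_left fun _ => by
      dsimp only
      exact (Finset.measurable_sum _ fun i _ => hφ.comp (measurable_pi_apply i)).const_mul _
  exact hpair.comp (f := fun f => (f, hittingTime B N f))
    (measurable_id.prodMk (measurable_hittingTime hB N))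

end Measurability

section IID

variable [MeasurableSpace E] (m : Measure E) [IsProbabilityMeasure m] {B : Set E} {N : ℕ}

lemma infinitePi_forall_ge_mem_eq_zero {A : Set E} (hA : MeasurableSet A) (hmA : m A < 1)
    (M : ℕ) : Measure.infinitePi (fun _ : ℕ => m) {f | ∀ i, M ≤ i → f i ∈ A} = 0 := by
  have hle (k : ℕ) : Measure.infinitePi (fun _ : ℕ => m) {f | ∀ i, M ≤ i → f i ∈ A} ≤ m A ^ k :=
    calc Measure.infinitePi (fun _ : ℕ => m) {f | ∀ i, M ≤ i → f i ∈ A}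
        _ ≤ Measure.infinitePi (fun _ : ℕ => m) (Set.pi ↑(Finset.Ico M (M + k)) fun _ => A) :=
          measure_mono fun _ hf i hi => hf i (Finset.mem_Ico.1 hi).1
        _ = m A ^ k := by
          rw [Measure.infinitePi_pi _ fun _ _ => hA, Finset.prod_const, Nat.card_Ico,
            add_tsub_cancel_left]
  exact le_antisymm
    (ge_of_tendsto' (ENNReal.tendsto_pow_atTop_nhds_zero_of_lt_one hmA) hle) zero_le

lemma infinitePi_hittingTime_eq_zero (hB : MeasurableSet B) (hmB : 0 < m B) (hN : N ≠ 0) :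
    Measure.infinitePi (fun _ : ℕ => m) (hittingTime B N ⁻¹' {0}) = 0 := by
  have hmBc : m Bᶜ < 1 := by
    rw [prob_compl_eq_one_sub hB]
    exact ENNReal.sub_lt_self ENNReal.one_ne_top one_ne_zero hmB.ne'
  refine measure_mono_null (fun f hf => ?_) (measure_iUnion_null
    (infinitePi_forall_ge_mem_eq_zero m hB.compl hmBc))
  simpa using exists_forall_ge_notMem_of_hittingTime_eq_zero hN hf

lemma setIntegral_hittingTime_eq_succ_apply_eq (φ : E → ℝ) {t i j : ℕ} (hi : i < t)
    (hj : j < t) :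
    ∫ f in hittingTime B N ⁻¹' {t + 1}, φ (f i) ∂Measure.infinitePi (fun _ : ℕ => m)
      = ∫ f in hittingTime B N ⁻¹' {t + 1}, φ (f j) ∂Measure.infinitePi (fun _ : ℕ => m) := by
  set σ := Equiv.swap i j
  have hσ (k : ℕ) (hk : σ k ≠ k) : k < t := by
    rcases eq_or_ne k i with rfl | hki
    · exact hi
    rcases eq_or_ne k j with rfl | hkj
    · exact hj
    exact absurd (Equiv.swap_apply_of_ne_of_ne hki hkj) hk
  set e := MeasurableEquiv.piCongrLeft (fun _ : ℕ => E) σ.symm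
  have he (f : ℕ → E) : e f = f ∘ σ := by
    ext k
    simp [e, MeasurableEquiv.coe_piCongrLeft, Equiv.piCongrLeft_apply]
  have hpre : e ⁻¹' (hittingTime B N ⁻¹' {t + 1}) = hittingTime B N ⁻¹' {t + 1} := by
    ext f
    simp [he, hittingTime_comp_perm_eq_succ_iff hσ]
  have hP : MeasurePreserving e (Measure.infinitePi fun _ : ℕ => m)
      (Measure.infinitePi fun _ : ℕ => m) :=
    ⟨e.measurable, Measure.infinitePi_map_piCongrLeft (fun _ : ℕ => m) σ.symm⟩
  have := hP.setIntegral_preimage_emb e.measurableEmbedding (fun f => φ (f j))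
    (hittingTime B N ⁻¹' {t + 1})
  simpa [hpre, he, σ] using this

lemma setIntegral_hittingMean_eq_succ (hB : MeasurableSet B) (hN : 2 ≤ N) {φ : E → ℝ}
    (hφ : Integrable φ m) (t : ℕ) :
    ∫ f in hittingTime B N ⁻¹' {t + 1}, hittingMean B N φ f ∂Measure.infinitePi (fun _ : ℕ => m)
      = ∫ f in hittingTime B N ⁻¹' {t + 1}, φ (f 0) ∂Measure.infinitePi (fun _ : ℕ => m) := by
  set S := hittingTime B N ⁻¹' {t + 1}
  rcases Nat.eq_zero_or_pos t with rfl | ht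
  · have hS : S = ∅ := Set.eq_empty_of_forall_notMem fun f (hf : hittingTime B N f = 1) => by
      have := le_hittingTime (hf ▸ one_ne_zero)
      omega
    simp [hS]
  have hcoord (i : ℕ) : Integrable (fun f : ℕ → E => φ (f i)) (Measure.infinitePi fun _ => m) :=
    (measurePreserving_eval_infinitePi _ i).integrable_comp_of_integrable hφ
  calc ∫ f in S, hittingMean B N φ f ∂Measure.infinitePi (fun _ : ℕ => m)
      = ∫ f in S, (1 / (t : ℝ)) * ∑ i ∈ Finset.range t, φ (f i)
          ∂Measure.infinitePi (fun _ : ℕ => m) :=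
        setIntegral_congr_fun (measurable_hittingTime hB N (measurableSet_singleton _))
          fun f (hf : hittingTime B N f = t + 1) => by simp [hittingMean, hf]
    _ = (1 / (t : ℝ)) * ∑ i ∈ Finset.range t,
          ∫ f in S, φ (f i) ∂Measure.infinitePi (fun _ : ℕ => m) := by
        rw [integral_const_mul, integral_finsetSum _ fun i _ => (hcoord i).integrableOn]
    _ = (1 / (t : ℝ)) * ∑ i ∈ Finset.range t,
          ∫ f in S, φ (f 0) ∂Measure.infinitePi (fun _ : ℕ => m) := by
        congr 1
        exact Finset.sum_congr rfl fun i hi =>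
          setIntegral_hittingTime_eq_succ_apply_eq m φ (Finset.mem_range.1 hi) ht
    _ = ∫ f in S, φ (f 0) ∂Measure.infinitePi (fun _ : ℕ => m) := by
        rw [Finset.sum_const, Finset.card_range, nsmul_eq_mul]
        field_simp

theorem integral_hittingMean_infinitePi (hB : MeasurableSet B) (hmB : 0 < m B) (hN : 2 ≤ N)
    {φ : E → ℝ} (hφ : Measurable φ) {C : ℝ} (hφC : ∀ x, |φ x| ≤ C) :
    ∫ f, hittingMean B N φ f ∂Measure.infinitePi (fun _ : ℕ => m) = ∫ x, φ x ∂m := by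
  have hC : 0 ≤ C := (abs_nonneg _).trans (hφC (nonempty_of_isProbabilityMeasure m).some)
  have hφi : Integrable φ m := .of_bound hφ.aestronglyMeasurable C (ae_of_all _ hφC)
  have hτ := measurable_hittingTime hB N
  have hnull : Measure.infinitePi (fun _ : ℕ => m) (hittingTime B N ⁻¹' {0}) = 0 :=
    infinitePi_hittingTime_eq_zero m hB hmB (by omega)
  have hfiber : ∀ s, ∫ f in hittingTime B N ⁻¹' {s}, hittingMean B N φ f
        ∂Measure.infinitePi (fun _ : ℕ => m)
      = ∫ f in hittingTime B N ⁻¹' {s}, φ (f 0) ∂Measure.infinitePi (fun _ : ℕ => m)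
    | 0 => by simp [Measure.restrict_eq_zero.2 hnull]
    | t + 1 => setIntegral_hittingMean_eq_succ m hB hN hφi t
  have hP0 := measurePreserving_eval_infinitePi (fun _ : ℕ => m) 0
  calc ∫ f, hittingMean B N φ f ∂Measure.infinitePi (fun _ : ℕ => m)
      = ∑' s, ∫ f in hittingTime B N ⁻¹' {s}, hittingMean B N φ f
          ∂Measure.infinitePi (fun _ : ℕ => m) :=
        integral_eq_tsum_setIntegral_fiber hτ <| .of_bound
          (measurable_hittingMean hB N hφ).aestronglyMeasurable C
          (ae_of_all _ (abs_hittingMean_le hC hφC))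
    _ = ∑' s, ∫ f in hittingTime B N ⁻¹' {s}, φ (f 0) ∂Measure.infinitePi (fun _ : ℕ => m) :=
        tsum_congr hfiber
    _ = ∫ f, φ (f 0) ∂Measure.infinitePi (fun _ : ℕ => m) :=
        (integral_eq_tsum_setIntegral_fiber hτ (hP0.integrable_comp_of_integrable hφi)).symm
    _ = ∫ x, φ x ∂(Measure.infinitePi fun _ : ℕ => m).map (Function.eval 0) :=
        (integral_map hP0.measurable.aemeasurable (hP0.map_eq ▸ hφ.aestronglyMeasurable)).symm
    _ = ∫ x, φ x ∂m := by rw [hP0.map_eq]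

end IID

end HittingTime

/-- The past `𝓕_{n-1}` is the first factor `Ω₀`, `κ ω₀` plays `Φ_n(η_{n-1}^{T_{n-1}})`, and
`ν ω₀` is the conditional law of the step-`n` samples. -/
theorem alive_filter_conditional_unbiased_general
    {E Ω₀ : Type*} [MeasurableSpace E] [MeasurableSpace Ω₀]
    (μ₀ : Measure Ω₀) [IsProbabilityMeasure μ₀]
    (κ : ProbabilityTheory.Kernel Ω₀ E) [IsMarkovKernel κ]
    (ν : ProbabilityTheory.Kernel Ω₀ (ℕ → E)) [IsMarkovKernel ν]
    (hiid : ∀ ω₀ (s : Finset ℕ) (A : ℕ → Set E), (∀ i, MeasurableSet (A i)) →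
      ν ω₀ {f | ∀ i ∈ s, f i ∈ A i} = ∏ i ∈ s, κ ω₀ (A i))
    (B : Set E) (hB : MeasurableSet B)
    (hq0 : ∀ ω₀, 0 < κ ω₀ B)
    (N : ℕ) (hN : 2 ≤ N)
    (T : Ω₀ × (ℕ → E) → ℕ)
    (hT : ∀ ω, T ω =
      sInf {n : ℕ | N ≤ ((Finset.range n).filter (fun i => ω.2 i ∈ B)).card})
    (φ : E → ℝ) (hφm : Measurable φ) (C : ℝ) (hφb : ∀ x, |φ x| ≤ C) :
    (μ₀ ⊗ₘ ν)[fun ω => (1 / ((T ω : ℝ) - 1)) *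
          ∑ i ∈ Finset.range (T ω - 1), φ (ω.2 i)
        | MeasurableSpace.comap (Prod.fst : Ω₀ × (ℕ → E) → Ω₀) inferInstance]
      =ᵐ[μ₀ ⊗ₘ ν] fun ω => ∫ y, φ y ∂(κ ω.1) := by
  obtain rfl : T = fun ω => hittingTime B N ω.2 := funext hT
  have hν (ω₀ : Ω₀) : ν ω₀ = Measure.infinitePi fun _ => κ ω₀ :=
    Measure.eq_infinitePi _ (hiid ω₀)
  obtain ⟨ω₀⟩ := nonempty_of_isProbabilityMeasure μ₀
  obtain ⟨x⟩ := nonempty_of_isProbabilityMeasure (κ ω₀)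
  have hC : 0 ≤ C := (abs_nonneg _).trans (hφb x)
  have hmeas : Measurable fun ω : Ω₀ × (ℕ → E) => hittingMean B N φ ω.2 :=
    (measurable_hittingMean hB N hφm).comp measurable_snd
  have hint : Integrable (fun ω : Ω₀ × (ℕ → E) => hittingMean B N φ ω.2) (μ₀ ⊗ₘ ν) :=
    .of_bound hmeas.aestronglyMeasurable C (ae_of_all _ fun ω => abs_hittingMean_le hC hφb ω.2)
  refine (condExp_comap_fst_compProd μ₀ ν hint hmeas.stronglyMeasurable).trans
    (ae_of_all _ fun ω => ?_)
  dsimp only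
  rw [hν]
  exact integral_hittingMean_infinitePi _ hB (hq0 ω.1) hN hφm hφb

/-- conditional unbiasedness of the one-step empirical measure: in the
alive particle filter, conditional on the past `𝓕_{n-1}` the step-`n` samples are
i.i.d. from the (random, past-measurable) measure `Φ_n(η_{n-1}^{T_{n-1}})` and `T_n`
is the corresponding hitting time.  We model the past by a probability space `Ω₀`
(carrying the particle system up to time `n−1`), the sampling law by a Markov kernel
`κ : Ω₀ → E` (playing the role of `Φ_n(η_{n-1}^{T_{n-1}})`) and the conditionally
i.i.d. samples by a kernel `ν : Ω₀ → (ℕ → E)` whose finite-dimensional laws are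
products of `κ`.  Then, on `Ω = Ω₀ × (ℕ → E)` with the measure `μ₀ ⊗ₘ ν` and
`𝓕_{n-1} = σ(fst)`,
`E[η_n^{T_n}(φ) | 𝓕_{n-1}] = Φ_n(η_{n-1}^{T_{n-1}})(φ) = ∫ φ dκ(·)` a.s. -/
theorem alive_filter_conditional_unbiased
    {E Ω₀ : Type*} [MeasurableSpace E] [MeasurableSpace Ω₀]
    (μ₀ : Measure Ω₀) [IsProbabilityMeasure μ₀]
    (κ : ProbabilityTheory.Kernel Ω₀ E) [IsMarkovKernel κ]
    (ν : ProbabilityTheory.Kernel Ω₀ (ℕ → E)) [IsMarkovKernel ν]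
    (hiid : ∀ ω₀ (s : Finset ℕ) (A : ℕ → Set E), (∀ i, MeasurableSet (A i)) →
      ν ω₀ {f | ∀ i ∈ s, f i ∈ A i} = ∏ i ∈ s, κ ω₀ (A i))
    (B : Set E) (hB : MeasurableSet B)
    (hq0 : ∀ ω₀, 0 < κ ω₀ B) (hq1 : ∀ ω₀, κ ω₀ B < 1)
    (N : ℕ) (hN : 2 ≤ N)
    (T : Ω₀ × (ℕ → E) → ℕ)
    (hT : ∀ ω, T ω =
      sInf {n : ℕ | N ≤ ((Finset.range n).filter (fun i => ω.2 i ∈ B)).card})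
    (φ : E → ℝ) (hφm : Measurable φ) (C : ℝ) (hφb : ∀ x, |φ x| ≤ C) :
    (μ₀ ⊗ₘ ν)[fun ω => (1 / ((T ω : ℝ) - 1)) *
          ∑ i ∈ Finset.range (T ω - 1), φ (ω.2 i)
        | MeasurableSpace.comap (Prod.fst : Ω₀ × (ℕ → E) → Ω₀) inferInstance]
      =ᵐ[μ₀ ⊗ₘ ν] fun ω => ∫ y, φ y ∂(κ ω.1) :=
  alive_filter_conditional_unbiased_general μ₀ κ ν hiid B hB hq0 N hN T hT φ hφm C hφb
end
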